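/- arXiv:2105.00496 — 9 statements merged into one kernel-verified Lean document; each statement's English description precedes it below -/
import Mathlib

section
/- A finite word x over a totally ordered alphabet is singular if and only if its reversal x̄ is singular. -/
/-- Lexicographic order on finite words with the convention that
`u < v` whenever `v` is a proper prefix of `u`. -/
def Wlt {A : Type*} [LinearOrder A] : List A → List A → Prop
  | [], _ => False
  | _ :: _, [] => True
  | a :: u, b :: v => a < b ∨ (a = b ∧ Wlt u v)

/-- A finite word is singular if every factorization `x = reverse u ++ v ++ w`
with `v` nonempty, `v ≠ reverse v`, `u ≠ w` satisfies `v < v̄ ↔ w < u`. -/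
def Singular {A : Type*} [LinearOrder A] (x : List A) : Prop :=
  ∀ u v w : List A, x = u.reverse ++ v ++ w → v ≠ [] → v ≠ v.reverse → u ≠ w →
    (Wlt v v.reverse ↔ Wlt w u)

lemma wlt_asymm {A : Type*} [LinearOrder A] :
    ∀ u v : List A, Wlt u v → ¬ Wlt v u := by
  intro u
  induction u with
  | nil => intro v h; exact absurd h (by simp [Wlt])
  | cons a u ih =>
    intro v h
    cases v with
    | nil => simp [Wlt]
    | cons b v =>
      rcases h with h | ⟨rfl, h⟩
      · rintro (h' | ⟨rfl, h'⟩)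
        · exact absurd h' (lt_asymm h)
        · exact lt_irrefl _ h
      · rintro (h' | ⟨-, h'⟩)
        · exact lt_irrefl _ h'
        · exact ih v h h'

lemma wlt_total {A : Type*} [LinearOrder A] :
    ∀ u v : List A, u ≠ v → Wlt u v ∨ Wlt v u := by
  intro u
  induction u with
  | nil =>
    intro v h
    cases v with
    | nil => exact absurd rfl h
    | cons b v => right; trivial
  | cons a u ih =>
    intro v h
    cases v with
    | nil => left; trivial
    | cons b v =>
      rcases lt_trichotomy a b with hab | rfl | hab
      · exact Or.inl (Or.inl hab)
      · have : u ≠ v := fun hh => h (by rw [hh])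
        rcases ih v this with h' | h'
        · exact Or.inl (Or.inr ⟨rfl, h'⟩)
        · exact Or.inr (Or.inr ⟨rfl, h'⟩)
      · exact Or.inr (Or.inl hab)

lemma wlt_iff_not {A : Type*} [LinearOrder A] {u v : List A} (h : u ≠ v) :
    Wlt u v ↔ ¬ Wlt v u := by
  constructor
  · exact wlt_asymm u v
  · intro h'
    rcases wlt_total u v h with h'' | h''
    · exact h''
    · exact absurd h'' h'

lemma singular_rev {A : Type*} [LinearOrder A] {x : List A} (h : Singular x) :
    Singular x.reverse := by
  intro u v w hx hv hvr huw
  have hx' : x = w.reverse ++ v.reverse ++ u := by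
    have := congrArg List.reverse hx
    simpa [List.reverse_append, List.append_assoc] using this
  have h2 := h w v.reverse u hx' (by simpa using hv)
      (by simpa using fun hh => hvr hh.symm) (fun hh => huw hh.symm)
  rw [List.reverse_reverse] at h2
  rw [wlt_iff_not hvr, wlt_iff_not (fun hh => huw hh.symm), h2]

theorem singular_iff_reverse_singular {A : Type*} [LinearOrder A] (x : List A) :
    Singular x ↔ Singular x.reverse := by
  constructor
  · exact singular_rev
  · intro h
    have := singular_rev h
    rwa [List.reverse_reverse] at this
end

section
/- If x is a finite singular word over a totally ordered alphabet A and a = min(x) is the smallest letter occurring in x, then x begins or ends with a. -/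
theorem singular_begins_or_ends_with_min {A : Type*} [LinearOrder A] (x : List A) (a : A)
    (hmem : a ∈ x) (hmin : ∀ b ∈ x, a ≤ b) (hsing : Singular x) :
    x.head? = some a ∨ x.getLast? = some a := by
  obtain ⟨p, s, rfl⟩ := List.append_of_mem hmem
  rcases p with _ | ⟨b, p'⟩
  · left; rfl
  set p := b :: p' with hp
  rcases s.eq_nil_or_concat with rfl | ⟨s', c, rfl⟩
  · right
    rw [show p ++ [a] = (p ++ [a]) from rfl, List.getLast?_concat]
  simp only [List.concat_eq_append] at hsing ⊢
  rcases eq_or_lt_of_le (hmin c (by simp)) with hc | hc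
  · right
    rw [show p ++ a :: (s' ++ [c]) = (p ++ a :: s') ++ [c] by simp, List.getLast?_concat, hc]
  · exfalso
    have h := hsing p.reverse (a :: (s' ++ [c])) []
      (by simp) (by simp) ?_ (by simp [hp])
    · have hrev : (a :: (s' ++ [c])).reverse = c :: (s'.reverse ++ [a]) := by simp
      rw [hrev] at h
      have : Wlt (a :: (s' ++ [c])) (c :: (s'.reverse ++ [a])) := Or.inl hc
      exact (h.mp this)
    · intro heq
      have : a = c := by
        have := congrArg List.head? heq
        simpa using this
      exact hc.ne this
end

section
/- If x is a finite singular word of the form x = a x' with x' nonempty, where a is the smallest letter occurring in x, then x' ends with the smallest letter occurring in x'. -/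
/-
Singularity forbids every suffix `v` of the word from being lexicographically smaller than its
mirror image: take `w = []` in the definition, and nothing is smaller than the empty word. A suffix
starting with a letter smaller than the last letter of the word would be such a `v`.
-/

namespace Wlt

variable {A : Type*} [LinearOrder A]

theorem irrefl : ∀ u : List A, ¬ Wlt u u
  | [] => id
  | a :: u => by
    simp only [Wlt, lt_irrefl, true_and, false_or]
    exact irrefl u

theorem of_head_lt {u v : List A} (hu : u ≠ []) (hv : v ≠ []) (h : u.head hu < v.head hv) :
    Wlt u v := by
  obtain ⟨a, u, rfl⟩ := List.exists_cons_of_ne_nil hu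
  obtain ⟨b, v, rfl⟩ := List.exists_cons_of_ne_nil hv
  exact Or.inl h

end Wlt

theorem not_wlt_nil_left {A : Type*} [LinearOrder A] (u : List A) : ¬ Wlt [] u := id

theorem Singular.getLast_le_head_of_append {A : Type*} [LinearOrder A] {s v : List A}
    (hx : Singular (s ++ v)) (hs : s ≠ []) (hv : v ≠ []) : v.getLast hv ≤ v.head hv := by
  by_contra! hlt
  have hlt_rev : Wlt v v.reverse :=
    Wlt.of_head_lt hv (List.reverse_ne_nil_iff.mpr hv) (by rwa [List.head_reverse])
  have hv_ne_rev : v ≠ v.reverse := fun h => Wlt.irrefl v (by rwa [← h] at hlt_rev)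
  have hs_rev : s.reverse ≠ [] := List.reverse_ne_nil_iff.mpr hs
  exact not_wlt_nil_left _ ((hx s.reverse v [] (by simp) hv hv_ne_rev hs_rev).mp hlt_rev)

theorem singular_tail_ends_with_its_min_general {A : Type*} [LinearOrder A] (a : A) (x' : List A)
    (hne : x' ≠ []) (hsing : Singular (a :: x')) :
    ∃ b, x'.getLast? = some b ∧ ∀ c ∈ x', b ≤ c := by
  refine ⟨x'.getLast hne, List.getLast?_eq_some_getLast hne, fun c hc => ?_⟩
  obtain ⟨p, q, rfl⟩ := List.mem_iff_append.mp hc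
  have hsuffix := Singular.getLast_le_head_of_append (s := a :: p) (v := c :: q) hsing
    (List.cons_ne_nil _ _) (List.cons_ne_nil _ _)
  rwa [List.getLast_append_of_ne_nil _ (List.cons_ne_nil _ _)]

theorem singular_tail_ends_with_its_min {A : Type*} [LinearOrder A] (a : A) (x' : List A)
    (hne : x' ≠ []) (hmin : ∀ b ∈ a :: x', a ≤ b) (hsing : Singular (a :: x')) :
    ∃ b, x'.getLast? = some b ∧ ∀ c ∈ x', b ≤ c :=
  singular_tail_ends_with_its_min_general a x' hne hsing
end

section
/- Let d be the minimum or maximum letter of a totally ordered alphabet A. If a finite singular word x contains dd as a factor, then d is separating for x, i.e., every length-2 factor of x contains the letter d. -/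
lemma wlt_cons {A : Type*} [LinearOrder A] (a b : A) (u v : List A) :
    Wlt (a :: u) (b :: v) ↔ a < b ∨ (a = b ∧ Wlt u v) := Iff.rfl

lemma extremal_contra {A : Type*} [LinearOrder A] {d a b : A}
    (had : d ≠ a) (hbd : d ≠ b)
    (hd : (∀ e : A, d ≤ e) ∨ (∀ e : A, e ≤ d))
    (h : d < a ↔ b < d) : False := by
  rcases hd with hmin | hmax
  · exact absurd (h.mp (lt_of_le_of_ne (hmin a) had)) (not_lt.mpr (hmin b))
  · exact absurd (h.mpr (lt_of_le_of_ne (hmax b) hbd.symm)) (not_lt.mpr (hmax a))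

lemma case1 {A : Type*} [LinearOrder A] {d a b : A}
    (had : d ≠ a) (hbd : d ≠ b)
    (hd : (∀ e : A, d ≤ e) ∨ (∀ e : A, e ≤ d))
    (s r q : List A)
    (hsing : Singular (s ++ [d, d] ++ r ++ [a, b] ++ q)) : False := by
  have key := hsing ((s ++ [d]).reverse) (d :: (r ++ [a])) (b :: q)
    (by simp) (by simp) ?_ ?_
  · rw [show (d :: (r ++ [a])).reverse = a :: (r.reverse ++ [d]) by simp,
      show (s ++ [d]).reverse = d :: s.reverse by simp] at key
    rw [wlt_cons, wlt_cons] at key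
    have : d < a ↔ b < d := by
      constructor
      · intro h; rcases key.mp (Or.inl h) with h' | ⟨h', _⟩
        · exact h'
        · exact absurd h'.symm hbd
      · intro h; rcases key.mpr (Or.inl h) with h' | ⟨h', _⟩
        · exact h'
        · exact absurd h' had
    exact extremal_contra had hbd hd this
  · intro h
    rw [show (d :: (r ++ [a])).reverse = a :: (r.reverse ++ [d]) by simp] at h
    exact had (List.cons.inj h).1
  · intro h
    rw [show (s ++ [d]).reverse = d :: s.reverse by simp] at h
    exact hbd (List.cons.inj h).1

lemma case2 {A : Type*} [LinearOrder A] {d a b : A}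
    (had : d ≠ a) (hbd : d ≠ b)
    (hd : (∀ e : A, d ≤ e) ∨ (∀ e : A, e ≤ d))
    (p r t : List A)
    (hsing : Singular (p ++ [a, b] ++ r ++ [d, d] ++ t)) : False := by
  have key := hsing ((p ++ [a]).reverse) (b :: (r ++ [d])) (d :: t)
    (by simp) (by simp) ?_ ?_
  · rw [show (b :: (r ++ [d])).reverse = d :: (r.reverse ++ [b]) by simp,
      show (p ++ [a]).reverse = a :: p.reverse by simp] at key
    rw [wlt_cons, wlt_cons] at key
    have : b < d ↔ d < a := by
      constructor
      · intro h; rcases key.mp (Or.inl h) with h' | ⟨h', _⟩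
        · exact h'
        · exact absurd h' had
      · intro h; rcases key.mpr (Or.inl h) with h' | ⟨h', _⟩
        · exact h'
        · exact absurd h'.symm hbd
    exact extremal_contra had hbd hd this.symm
  · intro h
    rw [show (b :: (r ++ [d])).reverse = d :: (r.reverse ++ [b]) by simp] at h
    exact hbd ((List.cons.inj h).1).symm
  · intro h
    rw [show (p ++ [a]).reverse = a :: p.reverse by simp] at h
    exact had ((List.cons.inj h).1).symm

theorem singular_dd_separating {A : Type*} [LinearOrder A] (d : A)
    (hd : (∀ e : A, d ≤ e) ∨ (∀ e : A, e ≤ d))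
    (x : List A) (hsing : Singular x) (hdd : [d, d] <:+: x) :
    ∀ u : List A, u <:+: x → u.length = 2 → d ∈ u := by
  intro u hu hlen
  by_contra hmem
  obtain ⟨a, b, rfl⟩ : ∃ a b, u = [a, b] := by
    match u, hlen with
    | [a, b], _ => exact ⟨a, b, rfl⟩
  simp only [List.mem_cons, List.mem_singleton, not_or] at hmem
  obtain ⟨had, hbd, -⟩ := hmem
  obtain ⟨s, t, hst⟩ := hdd
  obtain ⟨p, q, hpq⟩ := hu
  have heq : s ++ ([d, d] ++ t) = p ++ ([a, b] ++ q) := by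
    rw [← List.append_assoc, ← List.append_assoc, hst, hpq]
  rcases List.append_eq_append_iff.mp heq with ⟨r, hp, hr⟩ | ⟨r, hs, hr⟩
  · -- [d,d] ++ t = r ++ ([a,b] ++ q)
    rcases r with _ | ⟨x1, _ | ⟨x2, r'⟩⟩
    · simp at hr; exact had hr.1
    · simp at hr; exact had hr.2.1
    · simp at hr
      obtain ⟨h1, h2, h3⟩ := hr
      subst h1; subst h2
      have hx : x = s ++ [d, d] ++ r' ++ [a, b] ++ q := by
        rw [← hst, h3]; simp
      exact case1 had hbd hd s r' q (hx ▸ hsing)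
  · -- [a,b] ++ q = r ++ ([d,d] ++ t)
    rcases r with _ | ⟨x1, _ | ⟨x2, r'⟩⟩
    · simp at hr; exact had hr.1.symm
    · simp at hr; exact hbd hr.2.1.symm
    · simp at hr
      obtain ⟨h1, h2, h3⟩ := hr
      subst h1; subst h2
      have hx : x = p ++ [a, b] ++ r' ++ [d, d] ++ t := by
        rw [← hpq, h3]; simp
      exact case2 had hbd hd p r' t (hx ▸ hsing)
end

section
/- For any letter a in a totally ordered alphabet A and finite words x, y over A: x < y if and only if λ_a(x)a < λ_a(y)a, where λ_a is the morphism sending a to a and every other letter d' to a d'. -/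
/-- The morphism `λ_d` sending `d ↦ d` and `d' ↦ d d'` for `d' ≠ d`. -/
def lamM {A : Type*} [DecidableEq A] (d : A) (x : List A) : List A :=
  (x.map (fun e => if e = d then [d] else [d, e])).flatten

/-- The morphism `ρ_d` sending `d ↦ d` and `d' ↦ d' d` for `d' ≠ d`. -/
def rhoM {A : Type*} [DecidableEq A] (d : A) (x : List A) : List A :=
  (x.map (fun e => if e = d then [d] else [e, d])).flatten

lemma lamM_cons {A : Type*} [DecidableEq A] (a c : A) (x : List A) :
    lamM a (c :: x) = (if c = a then [a] else [a, c]) ++ lamM a x := by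
  simp [lamM]

lemma lamM_nil {A : Type*} [DecidableEq A] (a : A) : lamM a ([] : List A) = [] := rfl

lemma head_lamM {A : Type*} [DecidableEq A] (a : A) (x : List A) :
    ∃ t, lamM a x ++ [a] = a :: t := by
  cases x with
  | nil => exact ⟨[], rfl⟩
  | cons c x' =>
    by_cases h : c = a
    · exact ⟨lamM a x' ++ [a], by simp [lamM_cons, h]⟩
    · exact ⟨c :: (lamM a x' ++ [a]), by simp [lamM_cons, h]⟩

theorem wlt_iff_lamM_append {A : Type*} [LinearOrder A] (a : A) (x y : List A) :
    Wlt x y ↔ Wlt (lamM a x ++ [a]) (lamM a y ++ [a]) := by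
  induction x generalizing y with
  | nil =>
    obtain ⟨t, ht⟩ := head_lamM a y
    rw [ht]
    simp [Wlt, lamM]
  | cons c x' ih =>
    cases y with
    | nil =>
      obtain ⟨t, ht⟩ := head_lamM a x'
      rw [lamM_cons]
      by_cases hc : c = a <;>
        simp [hc, Wlt, ht, lamM_nil, lt_irrefl]
    | cons d y' =>
      by_cases hc : c = a <;> by_cases hd : d = a <;>
        rw [lamM_cons, lamM_cons]
      · rw [if_pos hc, if_pos hd]
        simp [Wlt, hc, hd, ih y', lt_irrefl]
      · rw [if_pos hc, if_neg hd]
        obtain ⟨t, ht⟩ := head_lamM a x'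
        simp [Wlt, hc, ht, Ne.symm hd, lt_irrefl]
      · rw [if_neg hc, if_pos hd]
        obtain ⟨t, ht⟩ := head_lamM a y'
        simp [Wlt, hd, ht, hc, lt_irrefl]
      · rw [if_neg hc, if_neg hd]
        simp [Wlt, ih y', lt_irrefl]
end

section
/- Let c be the maximum letter of a totally ordered alphabet A and x a nonempty finite word over A. Then x is singular if and only if the word obtained from ρ_c(x) by deleting its final letter c is singular, where ρ_c is the morphism fixing c and sending every other letter d' to d' c. -/
/-!
Write `σ x` for `ρ_c(x)` with its final `c` removed. As `c` is the largest letter, `ρ_c` preserves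
the order of words, hence so does `σ` on nonempty words, which is also injective there; and `σ`
commutes with reversal because the reversal of `ρ_c(x)` is `λ_c(x̄)`. So the singularity condition
at a triple `(u, v, w)` of nonempty words is the same as at `(σ u, σ v, σ w)`.

A factorization `x = ū v w` gives `σ x = (σ (c u))‾ σ(v) σ(c w)`. Conversely, each cut of `σ x`
falls between two blocks `c` or `d c` of `ρ_c(x)`, or inside a block `d c`; in each of the four
cases the factorization of `σ x` is the image under `σ` of a triple at which the condition follows
from the singularity of `x`, except when both cuts fall inside blocks, where both sides of the
condition are false.
-/

section Wlt

variable {A : Type*} [LinearOrder A] {a b c : A} {u v : List A}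

@[simp] lemma wlt_nil_left : ¬ Wlt [] v := id

@[simp] lemma wlt_nil_right : Wlt u [] ↔ u ≠ [] := by
  cases u <;> simp [Wlt]

lemma wlt_cons_cons : Wlt (a :: u) (b :: v) ↔ a < b ∨ a = b ∧ Wlt u v := Iff.rfl

@[simp] lemma wlt_cons_cons_self : Wlt (a :: u) (a :: v) ↔ Wlt u v := by
  simp [wlt_cons_cons]

lemma not_wlt_max_cons (hc : ∀ e, e ≤ c) (hb : b ≠ c) : ¬ Wlt (c :: u) (b :: v) := by
  rintro (h | ⟨rfl, -⟩)
  exacts [(hc b).not_gt h, hb rfl]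

lemma wlt_concat_max (hc : ∀ e, e ≤ c) : Wlt (u ++ [c]) (v ++ [c]) ↔ Wlt u v := by
  induction u generalizing v with
  | nil =>
    cases v with
    | nil => simp
    | cons b v => simp [wlt_cons_cons, (hc b).not_gt]
  | cons a u ih =>
    cases v with
    | nil => simpa [wlt_cons_cons] using (hc a).lt_or_eq
    | cons b v => simp [wlt_cons_cons, ih]

end Wlt

section RhoM

variable {A : Type*} [DecidableEq A] {c : A}

@[simp] lemma rhoM_nil : rhoM c [] = [] := rfl

lemma rhoM_cons (a : A) (s : List A) :
    rhoM c (a :: s) = (if a = c then [c] else [a, c]) ++ rhoM c s := by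
  simp [rhoM]

@[simp] lemma rhoM_cons_self (s : List A) : rhoM c (c :: s) = c :: rhoM c s := by
  simp [rhoM_cons]

lemma rhoM_cons_of_ne {a : A} (ha : a ≠ c) (s : List A) :
    rhoM c (a :: s) = a :: c :: rhoM c s := by
  simp [rhoM_cons, ha]

@[simp] lemma rhoM_append (s t : List A) : rhoM c (s ++ t) = rhoM c s ++ rhoM c t := by
  simp [rhoM]

@[simp] lemma rhoM_eq_nil_iff {s : List A} : rhoM c s = [] ↔ s = [] := by
  rcases s with _ | ⟨a, s⟩
  · simp
  · by_cases ha : a = c <;> simp [ha, rhoM_cons_of_ne]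

lemma rhoM_injective (c : A) : Function.Injective (rhoM c) := by
  intro s t h
  induction s generalizing t with
  | nil => exact (rhoM_eq_nil_iff.mp h.symm).symm
  | cons a s ih =>
    cases t with
    | nil => simp at h
    | cons b t =>
      by_cases ha : a = c <;> by_cases hb : b = c
      · subst ha hb; simpa using ih (by simpa using h)
      · subst ha; simp [rhoM_cons_of_ne hb, Ne.symm hb] at h
      · subst hb; simp [rhoM_cons_of_ne ha, ha] at h
      · simp only [rhoM_cons_of_ne ha, rhoM_cons_of_ne hb, List.cons.injEq, true_and] at h
        rw [h.1, ih h.2]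

lemma lamM_concat (s : List A) : lamM c s ++ [c] = c :: rhoM c s := by
  induction s with
  | nil => rfl
  | cons a s ih =>
    by_cases ha : a = c <;> simp_all [lamM, rhoM_cons]

lemma reverse_rhoM (s : List A) : (rhoM c s).reverse = lamM c s.reverse := by
  simp [rhoM, lamM, List.reverse_flatten, Function.comp_def, apply_ite]

lemma dropLast_rhoM_concat {s : List A} (hs : s ≠ []) :
    (rhoM c s).dropLast ++ [c] = rhoM c s := by
  obtain ⟨t, a, rfl⟩ := (List.eq_nil_or_concat' s).resolve_left hs
  by_cases ha : a = c <;> simp [rhoM_cons, ha, List.dropLast_append_of_ne_nil]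

lemma dropLast_rhoM_concat_self (s : List A) : (rhoM c (s ++ [c])).dropLast = rhoM c s := by
  simp

lemma dropLast_rhoM_concat_of_ne {a : A} (ha : a ≠ c) (s : List A) :
    (rhoM c (s ++ [a])).dropLast = rhoM c s ++ [a] := by
  simp [rhoM_cons_of_ne ha, List.dropLast_append_of_ne_nil]

lemma dropLast_rhoM_cons_self {s : List A} (hs : s ≠ []) :
    (rhoM c (c :: s)).dropLast = c :: (rhoM c s).dropLast := by
  simp [List.dropLast_cons_of_ne_nil, hs]

lemma reverse_dropLast_rhoM (s : List A) :
    (rhoM c s).dropLast.reverse = (rhoM c s.reverse).dropLast := by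
  rcases eq_or_ne s [] with rfl | hs
  · rfl
  have hlam : c :: (rhoM c s).dropLast.reverse = lamM c s.reverse := by
    rw [← reverse_rhoM, ← dropLast_rhoM_concat hs, List.reverse_concat', List.dropLast_concat]
  have hlam' : lamM c s.reverse = c :: (rhoM c s.reverse).dropLast := by
    apply List.append_cancel_right (bs := [c])
    rw [lamM_concat, List.cons_append, dropLast_rhoM_concat (List.reverse_ne_nil_iff.mpr hs)]
  simpa [hlam'] using hlam

lemma dropLast_rhoM_inj {s t : List A} (hs : s ≠ []) (ht : t ≠ []) :
    (rhoM c s).dropLast = (rhoM c t).dropLast ↔ s = t := by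
  refine ⟨fun h => rhoM_injective c ?_, by rintro rfl; rfl⟩
  rw [← dropLast_rhoM_concat hs, h, dropLast_rhoM_concat ht]

lemma dropLast_rhoM_ne_nil {s : List A} (hs : s ≠ []) (hsc : s ≠ [c]) :
    (rhoM c s).dropLast ≠ [] := by
  intro h
  apply hsc (rhoM_injective c _)
  rw [← dropLast_rhoM_concat hs, h]
  simp

lemma dropLast_rhoM_append {v : List A} (hv : v ≠ []) (u w : List A) :
    (rhoM c (u ++ v ++ w)).dropLast =
      rhoM c u ++ (rhoM c v).dropLast ++ (rhoM c (c :: w)).dropLast := by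
  conv_lhs => rw [rhoM_append, rhoM_append, ← dropLast_rhoM_concat hv]
  simp [List.dropLast_append_of_ne_nil]

lemma append_eq_rhoM {a b x : List A} (h : a ++ b = rhoM c x) :
    (∃ p q, x = p ++ q ∧ a = rhoM c p ∧ b = rhoM c q) ∨
      ∃ p e q, e ≠ c ∧ x = p ++ e :: q ∧ a = rhoM c p ++ [e] ∧ b = c :: rhoM c q := by
  induction x generalizing a with
  | nil =>
    obtain ⟨rfl, rfl⟩ := List.append_eq_nil_iff.mp h
    exact Or.inl ⟨[], [], rfl, rfl, rfl⟩
  | cons d x ih =>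
    rcases a with _ | ⟨f, a⟩
    · exact Or.inl ⟨[], d :: x, rfl, rfl, h⟩
    by_cases hd : d = c
    · subst hd
      rw [rhoM_cons_self, List.cons_append, List.cons.injEq] at h
      obtain ⟨rfl, h⟩ := h
      rcases ih h with ⟨p, q, rfl, rfl, rfl⟩ | ⟨p, e, q, he, rfl, rfl, rfl⟩
      · exact Or.inl ⟨f :: p, q, rfl, by simp, rfl⟩
      · exact Or.inr ⟨f :: p, e, q, he, rfl, by simp, rfl⟩
    · rw [rhoM_cons_of_ne hd, List.cons_append, List.cons.injEq] at h
      obtain ⟨rfl, h⟩ := h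
      rcases a with _ | ⟨g, a⟩
      · exact Or.inr ⟨[], f, x, hd, rfl, rfl, h⟩
      rw [List.cons_append, List.cons.injEq] at h
      obtain ⟨rfl, h⟩ := h
      rcases ih h with ⟨p, q, rfl, rfl, rfl⟩ | ⟨p, e, q, he, rfl, rfl, rfl⟩
      · exact Or.inl ⟨f :: p, q, rfl, by simp [rhoM_cons_of_ne hd], rfl⟩
      · exact Or.inr ⟨f :: p, e, q, he, rfl, by simp [rhoM_cons_of_ne hd], rfl⟩

end RhoM

section Singularity

variable {A : Type*} [LinearOrder A] {c : A}

lemma wlt_rhoM_iff (hc : ∀ e, e ≤ c) {s t : List A} :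
    Wlt (rhoM c s) (rhoM c t) ↔ Wlt s t := by
  induction s generalizing t with
  | nil => simp
  | cons a s ih =>
    cases t with
    | nil => simp
    | cons b t =>
      by_cases ha : a = c <;> by_cases hb : b = c
      · subst ha hb; simp [ih]
      · subst ha; simp [rhoM_cons_of_ne hb, wlt_cons_cons, (hc b).not_gt, Ne.symm hb]
      · subst hb; simp [rhoM_cons_of_ne ha, wlt_cons_cons, (hc a).lt_of_ne ha]
      · simp [rhoM_cons_of_ne ha, rhoM_cons_of_ne hb, wlt_cons_cons, ih]

lemma wlt_dropLast_rhoM_iff (hc : ∀ e, e ≤ c) {s t : List A} (hs : s ≠ []) (ht : t ≠ []) :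
    Wlt (rhoM c s).dropLast (rhoM c t).dropLast ↔ Wlt s t := by
  rw [← wlt_concat_max hc, dropLast_rhoM_concat hs, dropLast_rhoM_concat ht, wlt_rhoM_iff hc]

def SingularAt (u v w : List A) : Prop :=
  v ≠ v.reverse → u ≠ w → (Wlt v v.reverse ↔ Wlt w u)

lemma Singular.singularAt {x u v w : List A} (hx : Singular x) (h : x = u.reverse ++ v ++ w) :
    SingularAt u v w := by
  rcases eq_or_ne v [] with rfl | hv
  · exact fun hpal => (hpal rfl).elim
  · exact hx u v w h hv

lemma singularAt_cons_cons {a : A} {u v w : List A} :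
    SingularAt (a :: u) v (a :: w) ↔ SingularAt u v w := by
  simp [SingularAt]

lemma singularAt_cons_concat_max (hc : ∀ e, e ≤ c) {u v w : List A} :
    SingularAt u (c :: (v ++ [c])) w ↔ SingularAt u v w := by
  simp [SingularAt, wlt_concat_max hc]

lemma singularAt_dropLast_rhoM_iff (hc : ∀ e, e ≤ c) {u v w : List A}
    (hu : u ≠ []) (hv : v ≠ []) (hw : w ≠ []) :
    SingularAt (rhoM c u).dropLast (rhoM c v).dropLast (rhoM c w).dropLast ↔
      SingularAt u v w := by
  have hv' : v.reverse ≠ [] := List.reverse_ne_nil_iff.mpr hv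
  simp only [SingularAt, reverse_dropLast_rhoM, ne_eq, dropLast_rhoM_inj hv hv',
    dropLast_rhoM_inj hu hw, wlt_dropLast_rhoM_iff hc hv hv', wlt_dropLast_rhoM_iff hc hw hu]

theorem Singular.of_dropLast_rhoM (hc : ∀ e, e ≤ c) {x : List A}
    (hy : Singular (rhoM c x).dropLast) : Singular x := by
  intro u v w hx hv
  rcases eq_or_ne v [c] with rfl | hvc
  · exact fun hpal => (hpal rfl).elim
  show SingularAt u v w
  rw [← singularAt_cons_cons (a := c),
    ← singularAt_dropLast_rhoM_iff hc (List.cons_ne_nil _ _) hv (List.cons_ne_nil _ _)]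
  refine hy _ _ _ ?_ (dropLast_rhoM_ne_nil hv hvc)
  rw [hx, dropLast_rhoM_append hv, reverse_dropLast_rhoM]
  simp

lemma Singular.singularAt_cons_max_concat_max (hc : ∀ e, e ≤ c) {p v w : List A}
    (hx : Singular (p ++ v ++ w)) (hw : w ≠ []) : SingularAt (c :: p.reverse) (v ++ [c]) w := by
  obtain ⟨d, w, rfl⟩ := List.exists_cons_of_ne_nil hw
  rcases eq_or_ne d c with hd | hd
  · subst d
    exact singularAt_cons_cons.mpr (hx.singularAt (by simp))
  -- Now `d w < c p̄`, and `v c < c v̄` holds by the first letter of `v` unless `v = c v'`, where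
  -- it is singularity at `(c p̄, v', d w)`.
  intro hpal hne
  have hdc : d < c := (hc d).lt_of_ne hd
  refine iff_of_true ?_ (Or.inl hdc)
  obtain ⟨a, v, rfl⟩ := List.exists_cons_of_ne_nil (show v ≠ [] by rintro rfl; exact hpal rfl)
  rcases eq_or_ne a c with ha | ha
  · subst a
    have key : SingularAt (c :: p.reverse) (c :: (v ++ [c])) (d :: w) :=
      (singularAt_cons_concat_max hc).mpr (hx.singularAt (by simp))
    exact (key hpal hne).2 (Or.inl hdc)
  · simp [wlt_cons_cons, (hc a).lt_of_ne ha]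

lemma Singular.singularAt_dropLast_rhoM_cons_max (hc : ∀ e, e ≤ c) {p q V W : List A}
    (hx : Singular (p ++ q)) (h : V ++ (W ++ [c]) = rhoM c q) :
    SingularAt (rhoM c (c :: p.reverse)).dropLast V W := by
  rcases append_eq_rhoM h with ⟨v, w, rfl, rfl, hW⟩ | ⟨v, e, w, he, rfl, rfl, hW⟩
  · have hw : w ≠ [] := by rintro rfl; simp at hW
    obtain rfl : W = (rhoM c w).dropLast := by rw [← hW, List.dropLast_concat]
    rw [← dropLast_rhoM_concat_self v, singularAt_dropLast_rhoM_iff hc (by simp) (by simp) hw]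
    exact Singular.singularAt_cons_max_concat_max hc (by rwa [← List.append_assoc] at hx) hw
  · obtain rfl : W = (rhoM c (c :: w)).dropLast := by
      rw [rhoM_cons_self, ← hW, List.dropLast_concat]
    rw [← dropLast_rhoM_concat_of_ne he,
      singularAt_dropLast_rhoM_iff hc (by simp) (by simp) (by simp), singularAt_cons_cons]
    exact hx.singularAt (by simp)

lemma Singular.singularAt_dropLast_rhoM_cons_of_ne (hc : ∀ e, e ≤ c) {p q V W : List A} {e : A}
    (he : e ≠ c) (hx : Singular (p ++ e :: q)) (hV : V ≠ [])
    (h : V ++ (W ++ [c]) = c :: rhoM c q) :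
    SingularAt (rhoM c (e :: p.reverse)).dropLast V W := by
  obtain ⟨f, V, rfl⟩ := List.exists_cons_of_ne_nil hV
  rw [List.cons_append, List.cons.injEq] at h
  obtain ⟨hf, h⟩ := h
  subst f
  rcases append_eq_rhoM h with ⟨v, w, rfl, rfl, hW⟩ | ⟨v, e', w, he', rfl, rfl, hW⟩
  · have hw : w ≠ [] := by rintro rfl; simp at hW
    obtain rfl : W = (rhoM c w).dropLast := by rw [← hW, List.dropLast_concat]
    rw [← dropLast_rhoM_concat_self v, ← dropLast_rhoM_cons_self (by simp),
      singularAt_dropLast_rhoM_iff hc (by simp) (by simp) hw, singularAt_cons_concat_max hc]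
    exact hx.singularAt (by simp)
  · obtain rfl : W = (rhoM c (c :: w)).dropLast := by
      rw [rhoM_cons_self, ← hW, List.dropLast_concat]
    rw [← dropLast_rhoM_concat_of_ne he', ← dropLast_rhoM_cons_self (by simp),
      singularAt_dropLast_rhoM_iff hc (by simp) (by simp) (by simp)]
    refine fun _ _ => iff_of_false ?_ (not_wlt_max_cons hc he)
    simpa using not_wlt_max_cons hc he'

theorem Singular.dropLast_rhoM (hc : ∀ e, e ≤ c) {x : List A} (hx : Singular x) :
    Singular (rhoM c x).dropLast := by
  intro U V W hy hV
  have hne : x ≠ [] := by rintro rfl; simp_all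
  have hρ : U.reverse ++ (V ++ (W ++ [c])) = rhoM c x := by
    rw [← dropLast_rhoM_concat hne, hy]; simp
  rcases append_eq_rhoM hρ with ⟨p, q, rfl, hU, hq⟩ | ⟨p, e, q, he, rfl, hU, hq⟩
  · obtain rfl : U = (rhoM c (c :: p.reverse)).dropLast := by
      rw [← List.reverse_inj, reverse_dropLast_rhoM, hU]; simp
    exact hx.singularAt_dropLast_rhoM_cons_max hc hq
  · obtain rfl : U = (rhoM c (e :: p.reverse)).dropLast := by
      rw [← List.reverse_inj, reverse_dropLast_rhoM, hU]; simp [rhoM_cons_of_ne he]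
    exact hx.singularAt_dropLast_rhoM_cons_of_ne hc he hV hq

end Singularity

theorem singular_iff_rhoM_max_general {A : Type*} [LinearOrder A] (c : A) (hc : ∀ e : A, e ≤ c)
    (x : List A) : Singular x ↔ Singular (rhoM c x).dropLast :=
  ⟨fun hx => hx.dropLast_rhoM hc, Singular.of_dropLast_rhoM hc⟩

theorem singular_iff_rhoM_max {A : Type*} [LinearOrder A] (c : A) (hc : ∀ e : A, e ≤ c)
    (x : List A) (hx : x ≠ []) : Singular x ↔ Singular (rhoM c x).dropLast :=
  singular_iff_rhoM_max_general c hc x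
end

section
/- Over the ordered alphabet {a < b < c}: if x is a finite singular word such that both ab and bc are factors of x, then x = a b^n (ca)^m for some n, m ≥ 1. -/
namespace SingularAux

open List

lemma wlt_cons {A : Type*} [LinearOrder A] {a b : A} {u v : List A} :
    Wlt (a :: u) (b :: v) ↔ a < b ∨ (a = b ∧ Wlt u v) := Iff.rfl

lemma wlt_nil {A : Type*} [LinearOrder A] (l : List A) : ¬ Wlt [] l := by
  simp [Wlt]

lemma wlt_cons_nil {A : Type*} [LinearOrder A] (a : A) (l : List A) : Wlt (a :: l) [] := by
  simp [Wlt]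

lemma mem_split_first {A : Type*} [DecidableEq A] {a : A} {l : List A} (h : a ∈ l) :
    ∃ s t, l = s ++ a :: t ∧ a ∉ s := by
  induction l with
  | nil => simp at h
  | cons b l ih =>
    by_cases hb : b = a
    · exact ⟨[], l, by simp [hb], by simp⟩
    · have hal : a ∈ l := by
        rcases mem_cons.mp h with h' | h'
        · exact absurd h'.symm hb
        · exact h'
      obtain ⟨s, t, hst, hna⟩ := ih hal
      refine ⟨b :: s, t, by simp [hst], ?_⟩
      simp only [mem_cons, not_or]
      exact ⟨fun h' => hb h'.symm, hna⟩

variable {x : List (Fin 3)}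

/-- D1 : x starts with a. -/
lemma d1 (hsing : Singular x) (hab : [0, 1] <:+: x) : ∃ t, x = 0 :: t := by
  obtain ⟨s, t, h⟩ := hab
  cases s with
  | nil => exact ⟨1 :: t, by simpa using h.symm⟩
  | cons e s' =>
    suffices he : e = 0 by
      refine ⟨s' ++ [0, 1] ++ t, ?_⟩
      rw [← h, he]; simp
    by_contra hne
    have hx : x = List.reverse [] ++ (e :: (s' ++ [0])) ++ (1 :: t) := by
      rw [← h]; simp
    have hvr : (e :: (s' ++ [0])).reverse = 0 :: (s'.reverse ++ [e]) := by simp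
    have hvne : (e :: (s' ++ [0])) ≠ (e :: (s' ++ [0])).reverse := by
      rw [hvr]; intro hEq
      injection hEq with h1 _
      exact hne h1
    have H := hsing [] (e :: (s' ++ [0])) (1 :: t) hx (by simp) hvne (by simp)
    rw [hvr] at H
    have hlhs : ¬ Wlt (e :: (s' ++ [0])) (0 :: (s'.reverse ++ [e])) := by
      rw [wlt_cons]
      rintro (h' | ⟨h', -⟩)
      · exact Fin.not_lt_zero e h'
      · exact hne h'
    exact hlhs (H.mpr (wlt_cons_nil _ _))

/-- D2 : x ends with a. -/
lemma d2 (hsing : Singular x) (hab : [0, 1] <:+: x) (hbc : [1, 2] <:+: x) :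
    ∃ y, x = y ++ [0] := by
  obtain ⟨t0, hx0⟩ := d1 hsing hab
  have h0x : (0 : Fin 3) ∈ x.reverse := by simp [hx0]
  obtain ⟨s, t, hst, hns⟩ := mem_split_first h0x
  have hx1 : x = t.reverse ++ 0 :: s.reverse := by
    have := congrArg List.reverse hst
    simpa using this
  have hns' : (0 : Fin 3) ∉ s.reverse := by simpa using hns
  rcases hsr : s.reverse with _ | ⟨f, tl⟩
  · exact ⟨t.reverse, by rw [hx1, hsr]⟩
  exfalso
  rw [hsr] at hx1 hns'
  rcases htr : t.reverse with _ | ⟨z0, z'⟩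
  · -- x = 0 :: f :: tl with no 0 in f :: tl
    rw [htr] at hx1
    simp only [List.nil_append] at hx1
    -- from hab, the a of ab must be at position 0, so f = 1
    obtain ⟨s1, t1, hab'⟩ := hab
    have hf1 : f :: tl = 1 :: t1 := by
      cases s1 with
      | nil =>
        have h' := hab'.trans hx1
        simp only [List.nil_append, List.cons_append] at h'
        injection h' with _ h''
        exact h''.symm
      | cons e0 s1' =>
        exfalso
        have h' : e0 :: (s1' ++ [0, 1] ++ t1) = 0 :: f :: tl := by
          rw [← hx1, ← hab']; simp
        have h2 := (List.cons.injEq _ _ _ _ ▸ h').2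
        exact hns' (h2 ▸ (by simp : (0 : Fin 3) ∈ s1' ++ [0, 1] ++ t1))
    -- 2 occurs in f :: tl
    have h2m : (2 : Fin 3) ∈ f :: tl := by
      obtain ⟨s2, t2, hbc'⟩ := hbc
      have : (2 : Fin 3) ∈ x := by rw [← hbc']; simp
      rw [hx1] at this
      rcases List.mem_cons.mp this with h' | h'
      · exact absurd h'.symm (by decide)
      · exact h'
    obtain ⟨l1, l2, hl, hnl⟩ := mem_split_first h2m
    have hl1ne : l1 ≠ [] := by
      intro h'
      rw [h', List.nil_append] at hl
      rw [hf1] at hl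
      exact absurd (List.cons.injEq _ _ _ _ ▸ hl).1 (by decide)
    rcases l1 with _ | ⟨g, l3⟩
    · exact hl1ne rfl
    have hg1 : g = 1 := by
      rw [hf1] at hl
      exact ((List.cons.injEq _ _ _ _ ▸ hl).1).symm
    -- apply singularity with u = [0], v = l1 ++ [2], w = l2
    have hx2 : x = [0].reverse ++ ((g :: l3) ++ [2]) ++ l2 := by
      rw [hx1, hl]; simp
    have hvr : ((g :: l3) ++ [2]).reverse = 2 :: (l3.reverse ++ [g]) := by simp
    have hvne : (g :: l3) ++ [2] ≠ ((g :: l3) ++ [2]).reverse := by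
      rw [hvr]; intro hEq
      injection hEq with h1 _
      rw [hg1] at h1; exact absurd h1 (by decide)
    have hno0 : (0 : Fin 3) ∉ l2 := fun h' => hns' (by rw [hl]; simp [h'])
    have huw : [(0 : Fin 3)] ≠ l2 := by
      intro h'; exact hno0 (by rw [← h']; simp)
    have H := hsing [0] ((g :: l3) ++ [2]) l2 hx2 (by simp) hvne huw
    have hlhs : Wlt ((g :: l3) ++ [2]) (((g :: l3) ++ [2]).reverse) := by
      rw [hvr]
      show Wlt (g :: (l3 ++ [2])) _
      rw [wlt_cons, hg1]
      exact Or.inl (by decide)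
    have hrhs := H.mp hlhs
    rcases l2 with _ | ⟨e2, l4⟩
    · exact wlt_nil _ hrhs
    · have he2 : e2 ≠ 0 := fun h' => hno0 (by simp [h'])
      rcases (wlt_cons).mp hrhs with h' | ⟨h', -⟩
      · exact Fin.not_lt_zero e2 h'  -- e2 < 0 impossible
      · exact he2 h'
  · -- z ≠ [] : suffix rule
    rw [htr] at hx1
    rcases hfr : (f :: tl).reverse with _ | ⟨g, l''⟩
    · exact absurd hfr (by simp)
    have hg0 : g ≠ 0 := by
      intro h'
      have : g ∈ (f :: tl).reverse := by rw [hfr]; simp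
      rw [List.mem_reverse] at this
      exact hns' (by simpa [h'] using this)
    have hx2 : x = (z0 :: z').reverse.reverse ++ (0 :: f :: tl) ++ [] := by
      rw [hx1]; simp
    have hvr : (0 :: f :: tl).reverse = g :: (l'' ++ [0]) := by
      show ((0 : Fin 3) :: (f :: tl)).reverse = _
      rw [List.reverse_cons, hfr]; simp
    have hvne : (0 : Fin 3) :: f :: tl ≠ (0 :: f :: tl).reverse := by
      rw [hvr]; intro hEq
      injection hEq with h1 _
      exact hg0 h1.symm
    have huw : (z0 :: z').reverse ≠ [] := by simp
    have H := hsing (z0 :: z').reverse (0 :: f :: tl) [] hx2 (by simp) hvne huw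
    have hlhs : Wlt (0 :: f :: tl) ((0 :: f :: tl).reverse) := by
      rw [hvr, wlt_cons]
      exact Or.inl (Fin.pos_of_ne_zero hg0)
    exact wlt_nil _ (H.mp hlhs)

/-- D3 : x ends with "ca". -/
lemma d3 (hsing : Singular x) (hab : [0, 1] <:+: x) (hbc : [1, 2] <:+: x) :
    ∃ y, x = y ++ [2, 0] := by
  obtain ⟨y, hy⟩ := d2 hsing hab hbc
  obtain ⟨s, t, hbc'⟩ := hbc
  rcases htt : t.reverse with _ | ⟨e, tr⟩
  · -- t = [] : x ends with 2, contradiction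
    exfalso
    have ht : t = [] := by simpa using congrArg List.reverse htt
    rw [ht] at hbc'
    have h' : (s ++ [1]) ++ [2] = y ++ [0] := by
      rw [← hy, ← hbc']; simp
    have := (List.append_inj' h' rfl).2
    exact absurd (List.cons.injEq _ _ _ _ ▸ this).1 (by decide)
  · have ht : t = tr.reverse ++ [e] := by
      have := congrArg List.reverse htt
      simpa using this
    have he : e = 0 := by
      have h' : (s ++ [1, 2] ++ tr.reverse) ++ [e] = y ++ [0] := by
        rw [← hy, ← hbc', ht]; simp
      exact (List.cons.injEq _ _ _ _ ▸ (List.append_inj' h' rfl).2).1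
    rcases tr with _ | ⟨d, t1⟩
    · -- t = [0] : x = s ++ [1,2,0]
      refine ⟨s ++ [1], ?_⟩
      rw [← hbc', ht, he]; simp
    · -- t = t1.reverse ++ [d, 0], d is second-to-last of x
      suffices hd : d = 2 by
        refine ⟨s ++ [1, 2] ++ t1.reverse, ?_⟩
        rw [← hbc', ht, he, hd]; simp
      by_contra hd
      have hx2 : x = (s ++ [1]).reverse.reverse ++ (2 :: (t1.reverse ++ [d])) ++ [0] := by
        rw [← hbc', ht, he]; simp
      have hvr : ((2 : Fin 3) :: (t1.reverse ++ [d])).reverse = d :: (t1 ++ [2]) := by simp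
      have hvne : (2 : Fin 3) :: (t1.reverse ++ [d]) ≠ ((2 : Fin 3) :: (t1.reverse ++ [d])).reverse := by
        rw [hvr]; intro hEq; injection hEq with h1 _; exact hd h1.symm
      have huw : (s ++ [1]).reverse ≠ [(0 : Fin 3)] := by
        simp only [List.reverse_append]
        intro hEq
        have : (1 : Fin 3) = 0 := by
          have := congrArg (fun l => l.head?) hEq
          simpa using this
        exact absurd this (by decide)
      have H := hsing (s ++ [1]).reverse (2 :: (t1.reverse ++ [d])) [0] hx2 (by simp) hvne huw
      have hrhs : Wlt [(0 : Fin 3)] ((s ++ [1]).reverse) := by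
        simp only [List.reverse_append, List.reverse_cons, List.reverse_nil, List.nil_append,
          List.cons_append, List.nil_append]
        rw [wlt_cons]
        exact Or.inl (by decide)
      have hlhs := H.mpr hrhs
      rw [hvr, wlt_cons] at hlhs
      rcases hlhs with h' | ⟨h', -⟩
      · exact absurd h' (by omega)
      · exact hd h'.symm

/-- Zpair : an interior `a` is always followed by `c`. -/
lemma zpair (hsing : Singular x) (h3 : ∃ y, x = y ++ [2, 0])
    {p w : List (Fin 3)} {d : Fin 3} (hx : x = p ++ 0 :: d :: w) (hp : p ≠ []) (hw : w ≠ []) :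
    d = 2 := by
  by_contra hd
  obtain ⟨y, hy⟩ := h3
  rcases hwr : w.reverse with _ | ⟨e, wr⟩
  · exact hw (by simpa using congrArg List.reverse hwr)
  have hwe : w = wr.reverse ++ [e] := by simpa using congrArg List.reverse hwr
  have he : e = 0 := by
    have h0 : x = (p ++ 0 :: d :: wr.reverse) ++ [e] := by rw [hx, hwe]; simp
    have h' : (p ++ 0 :: d :: wr.reverse) ++ [e] = (y ++ [2]) ++ [0] := by
      rw [← h0, hy]; simp
    exact (List.cons.injEq _ _ _ _ ▸ (List.append_inj' h' rfl).2).1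
  rcases wr with _ | ⟨f, w1⟩
  · -- w = [0] : then d is second-to-last of x, so d = 2, contra
    have h0 : x = (p ++ [0]) ++ [d, e] := by rw [hx, hwe]; simp
    have h' : (p ++ [0]) ++ [d, e] = y ++ [2, 0] := by rw [← h0, hy]
    have h2 := (List.append_inj' h' (by simp)).2
    exact hd (List.cons.injEq _ _ _ _ ▸ h2).1
  · -- w = w1.reverse ++ [f, 0] with f the second-to-last of x
    have hf : f = 2 := by
      have h0 : x = (p ++ 0 :: d :: w1.reverse) ++ [f, e] := by rw [hx, hwe]; simp
      have h' : (p ++ 0 :: d :: w1.reverse) ++ [f, e] = y ++ [2, 0] := by rw [← h0, hy]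
      have h2 := (List.append_inj' h' (by simp)).2
      exact (List.cons.injEq _ _ _ _ ▸ h2).1
    -- singularity with u = (p ++ [0]).reverse, v = d :: w1.reverse ++ [2], w = [0]
    have hx2 : x = (p ++ [0]).reverse.reverse ++ (d :: (w1.reverse ++ [2])) ++ [0] := by
      rw [hx, hwe, he, hf]; simp
    have hvr : (d :: (w1.reverse ++ [2])).reverse = 2 :: (w1 ++ [d]) := by simp
    have hvne : d :: (w1.reverse ++ [2]) ≠ (d :: (w1.reverse ++ [2])).reverse := by
      rw [hvr]; intro hEq; injection hEq with h1 _; exact hd h1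
    have huw : (p ++ [0]).reverse ≠ [(0 : Fin 3)] := by
      rcases hpr : p.reverse with _ | ⟨q, pr⟩
      · exact absurd (by simpa using congrArg List.reverse hpr) hp
      · simp [hpr]
    have H := hsing (p ++ [0]).reverse (d :: (w1.reverse ++ [2])) [0] hx2 (by simp) hvne huw
    have hlhs : Wlt (d :: (w1.reverse ++ [2])) ((d :: (w1.reverse ++ [2])).reverse) := by
      rw [hvr, wlt_cons]
      exact Or.inl (by omega)
    have hrhs := H.mp hlhs
    rw [List.reverse_append] at hrhs
    simp only [List.reverse_cons, List.reverse_nil, List.nil_append, List.cons_append] at hrhs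
    rcases (wlt_cons).mp hrhs with h' | ⟨-, h'⟩
    · exact absurd h' (by decide)
    · exact wlt_nil _ h'

/-- D4 : x starts with "ab". -/
lemma d4 (hsing : Singular x) (hab : [0, 1] <:+: x) (hbc : [1, 2] <:+: x) :
    ∃ t, x = 0 :: 1 :: t := by
  have h2 := d2 hsing hab hbc
  have h3 := d3 hsing hab hbc
  obtain ⟨s, t, hab'⟩ := hab
  cases s with
  | nil => exact ⟨t, by simpa using hab'.symm⟩
  | cons e s' =>
    exfalso
    have ht : t ≠ [] := by
      rintro rfl
      obtain ⟨y, hy⟩ := h2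
      have h' : ((e :: s') ++ [0]) ++ [1] = y ++ [0] := by rw [← hy, ← hab']; simp
      have := (List.append_inj' h' rfl).2
      exact absurd (List.cons.injEq _ _ _ _ ▸ this).1 (by decide)
    have hx : x = (e :: s') ++ 0 :: 1 :: t := by rw [← hab']; simp
    exact absurd (zpair hsing h3 hx (by simp) ht) (by decide)

/-- CSucc : every `c` with nonempty prefix is followed by `a`. -/
lemma csucc (hsing : Singular x) (hab : [0, 1] <:+: x) (hbc : [1, 2] <:+: x)
    {p w : List (Fin 3)} (hx : x = p ++ 2 :: w) (hp : p ≠ []) :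
    ∃ w', w = 0 :: w' := by
  obtain ⟨t, hx4⟩ := d4 hsing hab hbc
  obtain ⟨y, hy⟩ := d2 hsing hab hbc
  -- p = 0 :: 1 :: p''
  rcases p with _ | ⟨e0, p'⟩
  · exact absurd rfl hp
  have he0 : e0 = 0 := by
    have h' : e0 :: (p' ++ 2 :: w) = 0 :: 1 :: t := by rw [← hx4, hx] <;> rfl
    exact (List.cons.injEq _ _ _ _ ▸ h').1
  rcases p' with _ | ⟨e1, p''⟩
  · exfalso
    have h' : e0 :: (2 : Fin 3) :: w = 0 :: 1 :: t := by rw [← hx4, hx] <;> rfl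
    have := (List.cons.injEq _ _ _ _ ▸ (List.cons.injEq _ _ _ _ ▸ h').2).1
    exact absurd this (by decide)
  have he1 : e1 = 1 := by
    have h' : e0 :: e1 :: (p'' ++ 2 :: w) = 0 :: 1 :: t := by rw [← hx4, hx] <;> rfl
    exact (List.cons.injEq _ _ _ _ ▸ (List.cons.injEq _ _ _ _ ▸ h').2).1
  -- w ≠ []
  have hwne : w ≠ [] := by
    rintro rfl
    have h' : ((e0 :: e1 :: p'')) ++ [2] = y ++ [0] := by rw [← hy, hx] <;> rfl
    have := (List.append_inj' h' rfl).2
    exact absurd (List.cons.injEq _ _ _ _ ▸ this).1 (by decide)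
  by_cases hw0 : w = [0]
  · exact ⟨[], hw0⟩
  -- apply singularity with u = [0], v = (e1 :: p'') ++ [2], w
  have hx2 : x = [(0 : Fin 3)].reverse ++ ((e1 :: p'') ++ [2]) ++ w := by
    rw [hx, he0]; simp
  have hvr : ((e1 :: p'') ++ [2]).reverse = 2 :: (p''.reverse ++ [e1]) := by simp
  have hvne : (e1 :: p'') ++ [2] ≠ ((e1 :: p'') ++ [2]).reverse := by
    rw [hvr]; intro hEq; injection hEq with h1 _
    rw [he1] at h1; exact absurd h1 (by decide)
  have H := hsing [0] ((e1 :: p'') ++ [2]) w hx2 (by simp) hvne (fun h' => hw0 h'.symm)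
  have hlhs : Wlt ((e1 :: p'') ++ [2]) (((e1 :: p'') ++ [2]).reverse) := by
    rw [hvr]
    show Wlt (e1 :: (p'' ++ [2])) _
    rw [wlt_cons, he1]
    exact Or.inl (by decide)
  have hrhs := H.mp hlhs
  rcases w with _ | ⟨f, w'⟩
  · exact absurd rfl hwne
  rcases (wlt_cons).mp hrhs with h' | ⟨h', -⟩
  · exact absurd h' (Fin.not_lt_zero f)
  · exact ⟨w', by rw [h']⟩

/-- Everything strictly between the initial `a` and a later `1` is all `1`s. -/
lemma all1 (hsing : Singular x) (hab : [0, 1] <:+: x) (hbc : [1, 2] <:+: x)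
    {s1 r : List (Fin 3)} (hx : x = 0 :: s1 ++ 1 :: r) : ∀ e ∈ s1, e = 1 := by
  induction s1 using List.reverseRecOn generalizing r with
  | nil => simp
  | append_singleton s2 e ih =>
    have h3 := d3 hsing hab hbc
    have h2 := d2 hsing hab hbc
    fin_cases e
    · -- e = 0 : zpair contradiction
      exfalso
      have hr : r ≠ [] := by
        rintro rfl
        obtain ⟨y, hy⟩ := h2
        have h0 : x = (0 :: (s2 ++ [0])) ++ [1] := by rw [hx]; simp
        have h' : (0 :: (s2 ++ [0])) ++ [1] = y ++ [0] := by rw [← h0, hy]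
        have := (List.append_inj' h' rfl).2
        exact absurd (List.cons.injEq _ _ _ _ ▸ this).1 (by decide)
      have hx2 : x = (0 :: s2) ++ 0 :: 1 :: r := by rw [hx]; simp
      exact absurd (zpair hsing h3 hx2 (by simp) hr) (by decide)
    · -- e = 1
      have hx2 : x = 0 :: s2 ++ 1 :: (1 :: r) := by rw [hx]; simp
      have h' := ih hx2
      intro f hf
      rcases List.mem_append.mp hf with hf' | hf'
      · exact h' f hf'
      · simpa using hf'
    · -- e = 2 : csucc contradiction
      exfalso
      have hx2 : x = (0 :: s2) ++ 2 :: (1 :: r) := by rw [hx]; simp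
      obtain ⟨w', hw'⟩ := csucc hsing hab hbc hx2 (by simp)
      exact absurd (List.cons.injEq _ _ _ _ ▸ hw').1 (by decide)

/-- The tail from any `c` with nonempty prefix is `(ca)^m`. -/
lemma ca (hsing : Singular x) (hab : [0, 1] <:+: x) (hbc : [1, 2] <:+: x) :
    ∀ N t p, t.length ≤ N → x = p ++ 2 :: t → p ≠ [] →
      ∃ m, 1 ≤ m ∧ 2 :: t = (List.replicate m ([2, 0] : List (Fin 3))).flatten := by
  intro N
  induction N with
  | zero =>
    intro t p hlen hx hp
    obtain ⟨w', hw⟩ := csucc hsing hab hbc hx hp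
    rw [hw] at hlen; simp at hlen
  | succ N ih =>
    intro t p hlen hx hp
    obtain ⟨t', ht'⟩ := csucc hsing hab hbc hx hp
    subst ht'
    rcases t' with _ | ⟨d, t''⟩
    · exact ⟨1, le_refl 1, by simp⟩
    rcases t'' with _ | ⟨g, t3⟩
    · -- t = [0, d] : contradiction with x ending in [2,0]
      exfalso
      obtain ⟨y, hy⟩ := d3 hsing hab hbc
      have h0 : x = (p ++ [2, 0]) ++ [d] := by rw [hx]; simp
      have h' : (p ++ [2, 0]) ++ [d] = (y ++ [2]) ++ [0] := by rw [← h0, hy]; simp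
      have h1 := (List.append_inj' h' rfl).1
      have h1' : (p ++ [2]) ++ [0] = y ++ [2] := by rw [← h1]; simp
      exact absurd (List.cons.injEq _ _ _ _ ▸ (List.append_inj' h1' rfl).2).1 (by decide)
    · have h3 := d3 hsing hab hbc
      have hx2 : x = (p ++ [2]) ++ 0 :: d :: (g :: t3) := by rw [hx]; simp
      have hd := zpair hsing h3 hx2 (by simp) (by simp)
      subst hd
      have hx3 : x = (p ++ [2, 0]) ++ 2 :: (g :: t3) := by rw [hx]; simp
      obtain ⟨m, hm1, hmeq⟩ := ih (g :: t3) (p ++ [2, 0]) (by simp at hlen ⊢; omega) hx3 (by simp)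
      refine ⟨m + 1, by omega, ?_⟩
      rw [List.replicate_succ, List.flatten_cons, ← hmeq]
      rfl

end SingularAux

theorem singular_ab_bc_form (x : List (Fin 3)) (hsing : Singular x)
    (hab : [0, 1] <:+: x) (hbc : [1, 2] <:+: x) :
    ∃ n m : ℕ, 1 ≤ n ∧ 1 ≤ m ∧
      x = 0 :: (List.replicate n 1 ++ (List.replicate m ([2, 0] : List (Fin 3))).flatten) := by
  obtain ⟨t0, hx4⟩ := SingularAux.d4 hsing hab hbc
  obtain ⟨s, t, hbc'⟩ := id hbc
  rcases s with _ | ⟨e0, s'⟩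
  · exfalso
    have h' : (1 : Fin 3) :: (2 :: t) = 0 :: 1 :: t0 := by rw [← hx4, ← hbc']; rfl
    exact absurd (List.cons.injEq _ _ _ _ ▸ h').1 (by decide)
  have he0 : e0 = 0 := by
    have h' : e0 :: (s' ++ 1 :: 2 :: t) = 0 :: 1 :: t0 := by rw [← hx4, ← hbc']; simp
    exact (List.cons.injEq _ _ _ _ ▸ h').1
  have hx5 : x = 0 :: s' ++ 1 :: (2 :: t) := by rw [← hbc', he0]; simp
  have hall := SingularAux.all1 hsing hab hbc hx5
  have hs' : s' = List.replicate s'.length 1 := List.eq_replicate_of_mem hall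
  have hx6 : x = (0 :: (s' ++ [1])) ++ 2 :: t := by rw [hx5]; simp
  obtain ⟨m, hm, hmeq⟩ := SingularAux.ca hsing hab hbc t.length t _ le_rfl hx6 (by simp)
  refine ⟨s'.length + 1, m, by omega, hm, ?_⟩
  rw [hx6, ← hmeq, List.replicate_succ']
  conv_lhs => rw [hs']
  simp
end

section
/- A bi-infinite word x over an ordered binary alphabet {a < b} is singular if and only if it is balanced. -/
/-- Lexicographic (strict) order between one-sided infinite words. -/
def InfLt {A : Type*} [LinearOrder A] (x y : ℕ → A) : Prop :=
  ∃ n, (∀ i < n, x i = y i) ∧ x n < y n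

/-- `s` is a finite factor of the bi-infinite word `x`. -/
def FactorZ {A : Type*} (x : ℤ → A) (s : List A) : Prop :=
  ∃ i : ℤ, s = (List.range s.length).map fun j => x (i + j)

/-- A bi-infinite word `x` is singular: for each occurrence of a nonempty
non-palindromic factor `v` at position `i`, writing `x = ū v w` with
`u n = x (i - 1 - n)` and `w n = x (i + |v| + n)`, if `u ≠ w` then
`v < v̄ ↔ w < u`. -/
def SingularInfZ {A : Type*} [LinearOrder A] (x : ℤ → A) : Prop :=
  ∀ (i : ℤ) (v : List A),
    v = (List.range v.length).map (fun j => x (i + j)) → v ≠ [] → v ≠ v.reverse →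
    (fun n : ℕ => x (i - 1 - n)) ≠ (fun n : ℕ => x (i + v.length + n)) →
    (Wlt v v.reverse ↔
      InfLt (fun n : ℕ => x (i + v.length + n)) (fun n : ℕ => x (i - 1 - n)))

/-!
Fix a reflection `p ↦ s - p` of `ℤ` and call `p` a defect if `x p ≠ x (s - p)`. Comparing `v`
with `v̄`, and `w` with `u`, only looks at the two defects of the reflection fixing `v` that are
nearest to the left end of `v`, one inside `v` and one outside it. So for a binary word,
singularity says that consecutive defects `p < q` of any reflection, in its left half, carry
different letters. Balance says the same. If `x p = x q`, then `x[p..q]` and `x[s-q..s-p]` have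
mirror-image interiors and their `a`-counts differ by two. Conversely, pair the letters of two
disjoint factors of length `n` from the outside in, around their common centre: the pairs that
differ are defects, so they alternate in sign, and the difference of the `a`-counts is a partial
alternating sum of `±1`s.
-/

namespace BiinfiniteWord

section FirstDifference

variable {α : Type*}

theorem eq_of_first_ne {f g : ℕ → α} {j k : ℕ} (hj : ∀ l < j, f l = g l) (hj' : f j ≠ g j)
    (hk : ∀ l < k, f l = g l) (hk' : f k ≠ g k) : j = k := by
  by_contra h
  rcases Nat.lt_or_gt_of_ne h with h | h
  exacts [hj' (hk j h), hk' (hj k h)]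

theorem exists_first_ne {f g : ℕ → α} (h : f ≠ g) :
    ∃ j, (∀ l < j, f l = g l) ∧ f j ≠ g j := by
  classical
  have hex : ∃ j, f j ≠ g j := Function.ne_iff.mp h
  exact ⟨Nat.find hex, fun l hl => not_not.mp (Nat.find_min hex hl), Nat.find_spec hex⟩

theorem exists_first_ne_of_map_range_ne {f g : ℕ → α} {n : ℕ}
    (h : (List.range n).map f ≠ (List.range n).map g) :
    ∃ j < n, (∀ l < j, f l = g l) ∧ f j ≠ g j := by
  obtain ⟨j, heq, hne⟩ := exists_first_ne fun hfg : f = g => h (hfg ▸ rfl)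
  refine ⟨j, ?_, heq, hne⟩
  by_contra! hnj
  exact h (List.map_congr_left fun l hl => heq l ((List.mem_range.mp hl).trans_le hnj))

end FirstDifference

section Lex

variable {A : Type*} [LinearOrder A]

theorem wlt_map_range_iff (f g : ℕ → A) (n : ℕ) :
    Wlt ((List.range n).map f) ((List.range n).map g) ↔
      ∃ j < n, (∀ l < j, f l = g l) ∧ f j < g j := by
  induction n generalizing f g with
  | zero => simp [Wlt]
  | succ n ih =>
    rw [List.range_succ_eq_map, List.map_cons, List.map_map, List.map_cons, List.map_map]
    simp only [Wlt, ih]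
    constructor
    · rintro (h0 | ⟨h0, j, hj, hl, hlt⟩)
      · exact ⟨0, n.succ_pos, fun l hl => absurd hl l.not_lt_zero, h0⟩
      · refine ⟨j + 1, by omega, fun l hl' => ?_, hlt⟩
        cases l with
        | zero => exact h0
        | succ l => exact hl l (by omega)
    · rintro ⟨j, hj, hl, hlt⟩
      cases j with
      | zero => exact Or.inl hlt
      | succ j =>
        exact Or.inr ⟨hl 0 (by omega), j, by omega, fun l hl' => hl (l + 1) (by omega), hlt⟩

theorem wlt_map_range_iff_of_first_ne {f g : ℕ → A} {n j : ℕ} (hj : j < n)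
    (heq : ∀ l < j, f l = g l) (hne : f j ≠ g j) :
    Wlt ((List.range n).map f) ((List.range n).map g) ↔ f j < g j := by
  rw [wlt_map_range_iff]
  exact ⟨fun ⟨k, _, hk, hlt⟩ => eq_of_first_ne heq hne hk hlt.ne ▸ hlt,
    fun h => ⟨j, hj, heq, h⟩⟩

theorem infLt_iff_of_first_ne {f g : ℕ → A} {j : ℕ} (heq : ∀ l < j, f l = g l)
    (hne : f j ≠ g j) : InfLt f g ↔ f j < g j :=
  ⟨fun ⟨_, hk, hlt⟩ => eq_of_first_ne heq hne hk hlt.ne ▸ hlt, fun h => ⟨j, heq, h⟩⟩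

end Lex

section Window

variable {α : Type*} (x : ℤ → α)

def window (i : ℤ) (n : ℕ) : List α := (List.range n).map fun k : ℕ => x (i + k)

@[simp]
theorem length_window (i : ℤ) (n : ℕ) : (window x i n).length = n := by
  simp [window]

/-- In `FactorZ` and `SingularInfZ`, `List.range n` is coerced to `List ℤ`. -/
theorem map_range_cast_eq_window (i : ℤ) (n : ℕ) :
    (List.range n).map (fun j => x (i + j)) = window x i n := by
  change List.map _ ((List.range n).flatMap (pure ∘ Nat.cast)) = _
  rw [List.flatMap_pure_eq_map, List.map_map]
  rfl

theorem factorZ_window (i : ℤ) (n : ℕ) : FactorZ x (window x i n) :=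
  ⟨i, by rw [map_range_cast_eq_window, length_window]⟩

theorem window_add (i : ℤ) (m n : ℕ) :
    window x i (m + n) = window x i m ++ window x (i + m) n := by
  simp [window, List.range_add, add_assoc]

theorem window_one (i : ℤ) : window x i 1 = [x i] := by
  simp [window]

theorem reverse_window (i : ℤ) (n : ℕ) :
    (window x i n).reverse = (List.range n).map fun k : ℕ => x (i + n - 1 - k) := by
  refine List.ext_getElem (by simp [window]) fun k h₁ h₂ => ?_
  simp only [window, List.getElem_reverse, List.getElem_map, List.getElem_range, List.length_map,
    List.length_range]
  congr 1
  simp only [List.length_map, List.length_range] at h₂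
  omega

theorem count_map_range [DecidableEq α] (a : α) (f : ℕ → α) (n : ℕ) :
    (((List.range n).map f).count a : ℤ) = ∑ k ∈ Finset.range n, if f k = a then 1 else 0 := by
  induction n with
  | zero => simp
  | succ n ih =>
    rw [List.range_succ, List.map_append, List.count_append, Finset.sum_range_succ, ← ih]
    simp [List.count_singleton]

end Window

section Binary

theorem ite_add_ite_eq_one {α : Type*} [DecidableEq α] {a b c d : α} (hc : c = a ∨ c = b)
    (hd : d = a ∨ d = b) (hcd : c ≠ d) :
    ((if c = a then 1 else 0) + (if d = a then 1 else 0) : ℤ) = 1 := by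
  rcases hc with rfl | rfl <;> rcases hd with rfl | rfl <;> simp_all [Ne.symm hcd]

theorem eq_of_ne_of_ne {α : Type*} {a b c d e : α} (hc : c = a ∨ c = b) (hd : d = a ∨ d = b)
    (he : e = a ∨ e = b) (hcd : c ≠ d) (hce : c ≠ e) : d = e := by
  rcases hc with rfl | rfl <;> rcases hd with rfl | rfl <;> rcases he with rfl | rfl <;> simp_all

theorem lt_iff_lt_iff_ne {A : Type*} [LinearOrder A] {a b c c' d d' : A} (hab : a < b)
    (hc : c = a ∨ c = b) (hc' : c' = a ∨ c' = b) (hd : d = a ∨ d = b) (hd' : d' = a ∨ d' = b)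
    (hcc' : c ≠ c') (hdd' : d ≠ d') :
    (d < d' ↔ c' < c) ↔ c ≠ d := by
  rcases hc with rfl | rfl <;> rcases hc' with rfl | rfl <;> rcases hd with rfl | rfl <;>
    rcases hd' with rfl | rfl <;> simp_all [hab.not_gt, hab.ne']

end Binary

def MirrorAlternating {α : Type*} (x : ℤ → α) (s : ℤ) : Prop :=
  ∀ p q, p < q → 2 * q ≤ s → x p ≠ x (s - p) → x q ≠ x (s - q) →
    (∀ r, p < r → r < q → x r = x (s - r)) → x p ≠ x q

section Singular

variable {A : Type*} [LinearOrder A] {a b : A} {x : ℤ → A}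

theorem mirrorAlternating_of_singularInfZ (hab : a < b) (hbin : ∀ p, x p = a ∨ x p = b)
    (hx : SingularInfZ x) (s : ℤ) : MirrorAlternating x s := by
  intro p q hpq hqs hp hq hsymm
  obtain ⟨n, hn⟩ : ∃ n : ℕ, (n : ℤ) = s - 2 * q + 1 := ⟨(s - 2 * q + 1).toNat, by omega⟩
  obtain ⟨k, hk⟩ : ∃ k : ℕ, (k : ℤ) = q - 1 - p := ⟨(q - 1 - p).toNat, by omega⟩
  have hq' : x (q + (0 : ℕ)) ≠ x (q + n - 1 - (0 : ℕ)) := by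
    convert hq using 2 <;> omega
  have hray_eq : ∀ l < k, x (q - 1 - l) = x (q + n + l) := fun l hl => by
    convert hsymm (q - 1 - l) (by omega) (by omega) using 2; omega
  have hray_ne : x (q + n + k) ≠ x (q - 1 - k) := by
    convert hp.symm using 2 <;> omega
  have key := hx q (window x q n) (by rw [length_window, map_range_cast_eq_window])
    (List.ne_nil_of_length_pos (by rw [length_window]; omega))
    (by
      rw [reverse_window, window]
      exact fun h => hq' (List.map_eq_map_iff.mp h 0 (List.mem_range.mpr (by omega))))
    (by simpa only [length_window] using fun h => hray_ne (congrFun h k).symm)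
  simp only [length_window] at key
  rw [reverse_window, window, wlt_map_range_iff_of_first_ne (by omega) (by simp) hq',
    infLt_iff_of_first_ne (fun l hl => (hray_eq l hl).symm) hray_ne] at key
  rw [← lt_iff_lt_iff_ne hab (hbin p) (hbin (s - p)) (hbin q) (hbin (s - q)) hp hq]
  convert key using 3 <;> omega

theorem singularInfZ_of_mirrorAlternating (hab : a < b) (hbin : ∀ p, x p = a ∨ x p = b)
    (hx : ∀ s, MirrorAlternating x s) : SingularInfZ x := by
  intro i v hv _ hpal hray
  rw [map_range_cast_eq_window] at hv
  generalize v.length = n at hv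
  subst hv
  simp only [length_window] at hray ⊢
  rw [reverse_window, window] at hpal ⊢
  obtain ⟨j, hjn, hj_eq, hj_ne⟩ := exists_first_ne_of_map_range_ne hpal
  obtain ⟨k, hk_eq, hk_ne⟩ := exists_first_ne hray
  rw [wlt_map_range_iff_of_first_ne hjn hj_eq hj_ne,
    infLt_iff_of_first_ne (fun l hl => (hk_eq l hl).symm) (Ne.symm hk_ne)]
  have hj_half : 2 * j + 1 ≤ n := by
    by_contra! h
    have := hj_eq (n - 1 - j) (by omega)
    exact hj_ne (by convert this.symm using 2 <;> omega)
  have hsymm : ∀ r, i - 1 - k < r → r < i + j → x r = x (2 * i + n - 1 - r) := by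
    intro r h₁ h₂
    obtain ⟨t, rfl | rfl⟩ : ∃ t : ℕ, r = i - 1 - t ∨ r = i + t :=
      ⟨(if r < i then i - 1 - r else r - i).toNat, by split_ifs <;> omega⟩
    · convert hk_eq t (by omega) using 2; omega
    · convert hj_eq t (by omega) using 2; omega
  have hne := hx (2 * i + n - 1) (i - 1 - k) (i + j) (by omega) (by omega)
    (by convert hk_ne using 2; omega) (by convert hj_ne using 2; omega) hsymm
  exact (lt_iff_lt_iff_ne hab (hbin _) (hbin _) (hbin _) (hbin _) hk_ne hj_ne).mpr hne

theorem singularInfZ_iff_forall_mirrorAlternating (hab : a < b)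
    (hbin : ∀ p, x p = a ∨ x p = b) : SingularInfZ x ↔ ∀ s, MirrorAlternating x s :=
  ⟨mirrorAlternating_of_singularInfZ hab hbin, singularInfZ_of_mirrorAlternating hab hbin⟩

end Singular

section Balanced

variable {α : Type*} [DecidableEq α] {x : ℤ → α} {a : α}

def Balanced (x : ℤ → α) (a : α) : Prop :=
  ∀ (i j : ℤ) (n : ℕ), |((window x i n).count a : ℤ) - (window x j n).count a| ≤ 1

theorem balanced_iff_factorZ : Balanced x a ↔ ∀ u v : List α, FactorZ x u → FactorZ x v →
    u.length = v.length → |(u.count a : ℤ) - (v.count a : ℤ)| ≤ 1 := by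
  refine ⟨fun h u v ⟨i, hu⟩ ⟨j, hv⟩ hlen => ?_, fun h i j n =>
    h _ _ (factorZ_window x i n) (factorZ_window x j n) (by simp)⟩
  rw [map_range_cast_eq_window] at hu hv
  rw [hu, hv, hlen]
  exact h i j _

theorem balanced_of_disjoint
    (h : ∀ (i j : ℤ) (n : ℕ), i + n ≤ j →
      |((window x j n).count a : ℤ) - (window x i n).count a| ≤ 1) :
    Balanced x a := by
  suffices H : ∀ (i j : ℤ) (n : ℕ), i ≤ j →
      |((window x j n).count a : ℤ) - (window x i n).count a| ≤ 1 by
    intro i j n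
    rcases le_total i j with hij | hij
    · rw [abs_sub_comm]; exact H i j n hij
    · exact H j i n hij
  intro i j n hij
  by_cases hd : i + n ≤ j
  · exact h i j n hd
  obtain ⟨d, rfl⟩ : ∃ d : ℕ, j = i + d := ⟨(j - i).toNat, by omega⟩
  obtain ⟨m, rfl⟩ : ∃ m, n = d + m := ⟨n - d, by omega⟩
  -- the common part `window x (i + d) m` cancels
  have h₁ : window x i (d + m) = window x i d ++ window x (i + d) m := window_add x i d m
  have h₂ : window x (i + d) (d + m) = window x (i + d) m ++ window x (i + (d + m : ℕ)) d := by
    rw [add_comm d m, window_add]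
    push_cast
    ring_nf
  have := h i (i + (d + m : ℕ)) d (by push_cast; omega)
  rw [h₁, h₂, List.count_append, List.count_append]
  push_cast at this ⊢
  convert this using 2
  ring

theorem mirrorAlternating_of_balanced {b : α} (hbin : ∀ p, x p = a ∨ x p = b)
    (h : Balanced x a) (s : ℤ) : MirrorAlternating x s := by
  intro p q hpq _ hp hq hsymm hpq_eq
  obtain ⟨m, hm⟩ : ∃ m : ℕ, (m : ℤ) = q - p - 1 := ⟨(q - p - 1).toNat, by omega⟩
  have hmid : window x (s - q + 1) m = (window x (p + 1) m).reverse := by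
    rw [reverse_window, window]
    refine List.map_congr_left fun k hk => ?_
    have := List.mem_range.mp hk
    convert (hsymm (q - 1 - k) (by omega) (by omega)).symm using 2 <;> omega
  have hl : window x p (1 + m + 1) = [x p] ++ window x (p + 1) m ++ [x q] := by
    rw [window_add, window_add, window_one, window_one,
      show p + ((1 + m : ℕ) : ℤ) = q by push_cast; omega, Nat.cast_one]
  have hr :
      window x (s - q) (1 + m + 1) = [x (s - q)] ++ window x (s - q + 1) m ++ [x (s - p)] := by
    rw [window_add, window_add, window_one, window_one,
      show s - q + ((1 + m : ℕ) : ℤ) = s - p by push_cast; omega, Nat.cast_one]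
  have := h p (s - q) (1 + m + 1)
  rw [hl, hr, hmid] at this
  simp only [List.count_append, List.count_reverse, List.count_singleton] at this
  have hsq : x (s - q) = x (s - p) :=
    eq_of_ne_of_ne (hbin p) (hbin _) (hbin _) (by rw [hpq_eq]; exact hq) hp
  rw [← hpq_eq, hsq, abs_le] at this
  have hone := ite_add_ite_eq_one (hbin p) (hbin (s - p)) hp
  by_cases h₁ : x p = a <;> by_cases h₂ : x (s - p) = a <;> simp [h₁, h₂] at this hone

theorem abs_sum_range_le_one_of_alternating {σ : ℕ → ℤ} {n : ℕ} (hσ : ∀ k < n, |σ k| ≤ 1)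
    (halt : ∀ k l, k < l → l < n → σ k ≠ 0 → σ l ≠ 0 → (∀ m, k < m → m < l → σ m = 0) →
      σ l = -σ k) :
    |∑ k ∈ Finset.range n, σ k| ≤ 1 := by
  suffices H : ∀ m ≤ n, ∑ k ∈ Finset.range m, σ k = 0 ∨
      ∃ k < m, σ k ≠ 0 ∧ ∑ k ∈ Finset.range m, σ k = σ k ∧ ∀ l, k < l → l < m → σ l = 0 by
    rcases H n le_rfl with h | ⟨k, hk, -, h, -⟩
    · simp [h]
    · exact h ▸ hσ k hk
  intro m hm
  induction m with
  | zero => simp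
  | succ m ih =>
    rw [Finset.sum_range_succ]
    by_cases hσm : σ m = 0
    · rcases ih (by omega) with h | ⟨k, hk, hne, hs, hz⟩
      · left; simp [h, hσm]
      · right
        refine ⟨k, by omega, hne, by rw [hs, hσm, add_zero], fun l hl₁ hl₂ => ?_⟩
        rcases Nat.lt_succ_iff_lt_or_eq.mp hl₂ with h | rfl
        exacts [hz l hl₁ h, hσm]
    · rcases ih (by omega) with h | ⟨k, hk, hne, hs, hz⟩
      · right; exact ⟨m, by omega, hσm, by rw [h, zero_add], fun l hl₁ hl₂ => by omega⟩
      · left; rw [hs, halt k m hk (by omega) hne hσm hz]; ring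

theorem abs_count_window_sub_le_one {b : α} (hbin : ∀ p, x p = a ∨ x p = b) {i j : ℤ} {n : ℕ}
    (hij : i + n ≤ j) (h : MirrorAlternating x (i + j + n - 1)) :
    |((window x j n).count a : ℤ) - (window x i n).count a| ≤ 1 := by
  set s := i + j + n - 1 with hs
  set ι : ℤ → ℤ := fun p => if x p = a then 1 else 0 with hι
  have hsum : ((window x j n).count a : ℤ) - (window x i n).count a =
      ∑ k ∈ Finset.range n, (ι (s - (i + k)) - ι (i + k)) := by
    rw [← List.count_reverse, reverse_window, window, count_map_range, count_map_range,
      ← Finset.sum_sub_distrib]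
    refine Finset.sum_congr rfl fun k _ => ?_
    simp only [hι]
    rw [show s - (i + k) = j + n - 1 - k by omega]
  have hι_add : ∀ p q, x p ≠ x q → ι p + ι q = 1 := fun p q hpq =>
    ite_add_ite_eq_one (hbin p) (hbin q) hpq
  have hσ_ne : ∀ k : ℕ, ι (s - (i + k)) - ι (i + k) ≠ 0 ↔ x (i + k) ≠ x (s - (i + k)) := by
    refine fun k => ⟨fun hσ heq => hσ (by simp [hι, heq]), fun hne => ?_⟩
    have := hι_add _ _ hne
    omega
  rw [hsum]
  apply abs_sum_range_le_one_of_alternating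
  · intro k _
    simp only [hι]
    split_ifs <;> norm_num
  · intro k l hkl hln hk hl hz
    have hne := h (i + k) (i + l) (by omega) (by omega) ((hσ_ne k).mp hk) ((hσ_ne l).mp hl)
      fun r h₁ h₂ => by
        obtain ⟨t, rfl⟩ : ∃ t : ℕ, r = i + t := ⟨(r - i).toNat, by omega⟩
        by_contra h'
        exact (hσ_ne t).mpr h' (hz t (by omega) (by omega))
    have h₁ := hι_add _ _ ((hσ_ne k).mp hk)
    have h₂ := hι_add _ _ ((hσ_ne l).mp hl)
    have h₃ := hι_add _ _ hne
    linarith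

theorem balanced_iff_forall_mirrorAlternating {b : α} (hbin : ∀ p, x p = a ∨ x p = b) :
    Balanced x a ↔ ∀ s, MirrorAlternating x s :=
  ⟨mirrorAlternating_of_balanced hbin, fun h =>
    balanced_of_disjoint fun _ _ _ hij => abs_count_window_sub_le_one hbin hij (h _)⟩

end Balanced

end BiinfiniteWord

open BiinfiniteWord in
theorem biinfinite_binary_singular_iff_balanced {A : Type*} [LinearOrder A]
    (a b : A) (hab : a < b) (x : ℤ → A) (hbin : ∀ i : ℤ, x i = a ∨ x i = b) :
    SingularInfZ x ↔
      ∀ u v : List A, FactorZ x u → FactorZ x v → u.length = v.length →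
        |(u.count a : ℤ) - (v.count a : ℤ)| ≤ 1 := by
  rw [singularInfZ_iff_forall_mirrorAlternating hab hbin,
    ← balanced_iff_forall_mirrorAlternating hbin, balanced_iff_factorZ]
end

section
/- Let x be a one-sided or bi-infinite word over the ordered alphabet {1 < 2 < ... < k} whose language L(x) is closed under reversal and in which each letter of the alphabet is recurrent. If x is singular, then for every finite factor s of x, the departure set D(s) = {a : sa ∈ L(x)} and the arrival set A(s) = {a : as ∈ L(x)} are intervals of {1,...,k}. -/
/-- Concatenation of a finite word with a one-sided infinite word. -/
def listAppendInf {A : Type*} (u : List A) (w : ℕ → A) : ℕ → A :=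
  fun n => if h : n < u.length then u.get ⟨n, h⟩ else w (n - u.length)

/-- `InfLtList w u` : the infinite word `w` is lexicographically smaller than the
finite word `u`, with the convention that `w < u` whenever `u` is a prefix of `w`. -/
def InfLtList {A : Type*} [LinearOrder A] : (ℕ → A) → List A → Prop
  | _, [] => True
  | w, a :: u => w 0 < a ∨ (w 0 = a ∧ InfLtList (fun n => w (n + 1)) u)

/-- A one-sided infinite word is singular if every factorization
`x = reverse u ++ v ++ w` with `v` a nonempty non-palindromic finite word
satisfies `v < v̄ ↔ w < u`. -/
def SingularInfN {A : Type*} [LinearOrder A] (x : ℕ → A) : Prop :=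
  ∀ (u v : List A) (w : ℕ → A),
    x = listAppendInf (u.reverse ++ v) w → v ≠ [] → v ≠ v.reverse →
      (Wlt v v.reverse ↔ InfLtList w u)

/-- `s` is a finite factor of the one-sided infinite word `x`. -/
def FactorN {A : Type*} (x : ℕ → A) (s : List A) : Prop :=
  ∃ i : ℕ, s = (List.range s.length).map fun j => x (i + j)

/-- A set of letters is an interval of consecutive letters. -/
def IsIntervalSet {k : ℕ} (S : Set (Fin k)) : Prop :=
  ∀ p q r : Fin k, p ≤ q → q ≤ r → p ∈ S → r ∈ S → q ∈ S

set_option linter.unusedSectionVars false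





section Helpers
variable {A : Type*} [LinearOrder A]

def consInf (a : A) (f : ℕ → A) : ℕ → A := fun n => match n with
  | 0 => a
  | m+1 => f m

@[simp] lemma consInf_zero (a : A) (f : ℕ → A) : consInf a f 0 = a := rfl
@[simp] lemma consInf_succ (a : A) (f : ℕ → A) (n : ℕ) : consInf a f (n+1) = f n := rfl
@[simp] lemma consInf_tail (a : A) (f : ℕ → A) : (fun n => consInf a f (n+1)) = f := rfl

lemma listAppendInf_nil (w : ℕ → A) : listAppendInf ([] : List A) w = w := by
  funext n; simp [listAppendInf]

lemma listAppendInf_cons (a : A) (v : List A) (w : ℕ → A) :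
    listAppendInf (a :: v) w = consInf a (listAppendInf v w) := by
  funext n
  cases n with
  | zero => simp [listAppendInf]
  | succ m =>
      simp only [listAppendInf, consInf]
      by_cases h : m < v.length
      · rw [dif_pos (by simpa using Nat.succ_lt_succ h), dif_pos h]
        rfl
      · rw [dif_neg (by simpa using fun hh => h (Nat.lt_of_succ_lt_succ hh)), dif_neg h]
        congr 1
        simp only [List.length_cons]
        omega

lemma InfLtList_cons_iff (f : ℕ → A) (b : A) (u : List A) :
    InfLtList f (b :: u) ↔ f 0 < b ∨ (f 0 = b ∧ InfLtList (fun n => f (n + 1)) u) := Iff.rfl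

lemma InfLtList_consInf (a : A) (f : ℕ → A) (b : A) (u : List A) :
    InfLtList (consInf a f) (b :: u) ↔ a < b ∨ (a = b ∧ InfLtList f u) := by
  rw [InfLtList_cons_iff]; simp

lemma Wlt_cons_iff (a b : A) (u v : List A) :
    Wlt (a :: u) (b :: v) ↔ a < b ∨ (a = b ∧ Wlt u v) := Iff.rfl

lemma InfLt_consInf (a b : A) (f g : ℕ → A) :
    InfLt (consInf a f) (consInf b g) ↔ a < b ∨ (a = b ∧ InfLt f g) := by
  constructor
  · rintro ⟨n, hag, hlt⟩
    cases n with
    | zero => exact Or.inl hlt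
    | succ m =>
        refine Or.inr ⟨by simpa using hag 0 (Nat.succ_pos m), ⟨m, fun i hi => ?_, by simpa using hlt⟩⟩
        simpa using hag (i+1) (by omega)
  · rintro (h | ⟨rfl, n, hag, hlt⟩)
    · exact ⟨0, by omega, h⟩
    · exact ⟨n+1, fun i hi => by cases i with
        | zero => rfl
        | succ j => simpa using hag j (by omega), by simpa using hlt⟩

lemma InfLtList_append_left (v : List A) (w : ℕ → A) (u : List A) :
    InfLtList (listAppendInf v w) (v ++ u) ↔ InfLtList w u := by
  induction v with
  | nil => rw [listAppendInf_nil]; rfl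
  | cons a v ih =>
      rw [listAppendInf_cons, List.cons_append, InfLtList_consInf]
      simp [lt_irrefl, ih]

lemma InfLtList_append_ne (v v' : List A) (h : v.length = v'.length) (hne : v ≠ v')
    (w : ℕ → A) (u : List A) :
    InfLtList (listAppendInf v w) (v' ++ u) ↔ Wlt v v' := by
  induction v generalizing v' with
  | nil => cases v' with
      | nil => exact absurd rfl hne
      | cons b v' => simp at h
  | cons a v ih =>
      cases v' with
      | nil => simp at h
      | cons b v' =>
          rw [listAppendInf_cons, List.cons_append, InfLtList_consInf, Wlt_cons_iff]
          by_cases hab : a = b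
          · subst hab
            have hne' : v ≠ v' := fun hh => hne (by rw [hh])
            simp [lt_irrefl, ih v' (by simpa using h) hne']
          · simp [hab]

lemma InfLt_append (v : List A) (w u : ℕ → A) :
    InfLt (listAppendInf v w) (listAppendInf v u) ↔ InfLt w u := by
  induction v with
  | nil => rw [listAppendInf_nil, listAppendInf_nil]
  | cons a v ih =>
      rw [listAppendInf_cons, listAppendInf_cons, InfLt_consInf]
      simp [lt_irrefl, ih]

lemma InfLt_append_ne (v v' : List A) (h : v.length = v'.length) (hne : v ≠ v')
    (w u : ℕ → A) :
    InfLt (listAppendInf v w) (listAppendInf v' u) ↔ Wlt v v' := by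
  induction v generalizing v' with
  | nil => cases v' with
      | nil => exact absurd rfl hne
      | cons b v' => simp at h
  | cons a v ih =>
      cases v' with
      | nil => simp at h
      | cons b v' =>
          rw [listAppendInf_cons, listAppendInf_cons, InfLt_consInf, Wlt_cons_iff]
          by_cases hab : a = b
          · subst hab
            have hne' : v ≠ v' := fun hh => hne (by rw [hh])
            simp [lt_irrefl, ih v' (by simpa using h) hne']
          · simp [hab]

end Helpers


section NatSide
variable {A : Type*} [LinearOrder A] (x : ℕ → A)

/-- suffix of `x` starting at `p` -/
def Rn (p : ℕ) : ℕ → A := fun n => x (p + n)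

/-- reversed prefix of `x` of length `m` -/
def Lw (m : ℕ) : List A := ((List.range m).map x).reverse

@[simp] lemma Lw_length (m : ℕ) : (Lw x m).length = m := by simp [Lw]

lemma Lw_succ (m : ℕ) : Lw x (m+1) = x m :: Lw x m := by
  simp [Lw, List.range_succ]

lemma Lw_add (s t : ℕ) :
    Lw x (s + t) = ((List.range t).map (fun i => x (s + i))).reverse ++ Lw x s := by
  simp [Lw, List.range_add, List.map_map, Function.comp]

lemma Rn_cons (p : ℕ) : Rn x p = consInf (x p) (Rn x (p+1)) := by
  funext n
  cases n with
  | zero => simp [Rn]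
  | succ m => simp only [Rn, consInf_succ]; congr 1; omega

lemma Rn_append (p t : ℕ) :
    Rn x p = listAppendInf ((List.range t).map (fun i => x (p + i))) (Rn x (p + t)) := by
  funext n
  by_cases h : n < t
  · rw [listAppendInf]
    rw [dif_pos (by simpa using h)]
    simp [Rn]
  · rw [listAppendInf]
    rw [dif_neg (by simpa using h)]
    simp only [Rn, List.length_map, List.length_range]
    congr 1
    omega

lemma symN (hsing : SingularInfN x) (p q : ℕ) (hpq : p ≤ q) :
    (InfLtList (Rn x p) (Lw x q) ↔ InfLtList (Rn x q) (Lw x p)) := by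
  obtain ⟨t, rfl⟩ : ∃ t, q = p + t := ⟨q - p, by omega⟩
  set v : List A := (List.range t).map (fun i => x (p + i)) with hv
  have hvlen : v.length = t := by simp [hv]
  have hR : Rn x p = listAppendInf v (Rn x (p + t)) := Rn_append x p t
  have hL : Lw x (p + t) = v.reverse ++ Lw x p := Lw_add x p t
  by_cases hpal : v = v.reverse
  · rw [hR, hL, ← hpal, InfLtList_append_left]
  · have hvne : v ≠ [] := by
      intro h0; apply hpal; rw [h0]; rfl
    have hx : x = listAppendInf ((Lw x p).reverse ++ v) (Rn x (p + t)) := by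
      funext n
      by_cases h1 : n < p + t
      · rw [listAppendInf]
        rw [dif_pos (by simp [hvlen, Lw]; omega)]
        rw [List.get_eq_getElem]
        by_cases h2 : n < p
        · rw [List.getElem_append_left (by simp [Lw]; omega)]
          simp [Lw]
        · rw [List.getElem_append_right (by simp [Lw]; omega)]
          simp only [hv, List.getElem_map, List.getElem_range, Lw_length]
          congr 1
          simp [Lw]
          omega
      · rw [listAppendInf]
        rw [dif_neg (by simp [hvlen, Lw]; omega)]
        simp only [Rn, List.length_append, Lw, List.length_reverse, List.length_map,
          List.length_range, hvlen]
        congr 1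
        omega
    have hsg := hsing (Lw x p) v (Rn x (p + t)) hx hvne hpal
    rw [hR, hL, InfLtList_append_ne v v.reverse (by simp) hpal]
    exact hsg

lemma symN' (hsing : SingularInfN x) (p q : ℕ) :
    (InfLtList (Rn x p) (Lw x q) ↔ InfLtList (Rn x q) (Lw x p)) := by
  rcases le_total p q with h | h
  · exact symN x hsing p q h
  · exact (symN x hsing q p h).symm

end NatSide
section NatFactors
variable {A : Type*} [LinearOrder A] {x : ℕ → A}

lemma factorN_iff {s : List A} :
    FactorN x s ↔ ∃ i : ℕ, ∀ t (h : t < s.length), s[t] = x (i + t) := by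
  constructor
  · rintro ⟨i, hi⟩
    refine ⟨i, fun t h => ?_⟩
    rw [List.getElem_of_eq hi h]
    simp
  · rintro ⟨i, hi⟩
    refine ⟨i, List.ext_getElem (by simp) fun t h1 h2 => ?_⟩
    simp [hi t h1]

lemma occN_parts {e r' : A} {z : List A} {i : ℕ}
    (h : ∀ t (ht : t < (e :: z ++ [r']).length), (e :: z ++ [r'])[t] = x (i + t)) :
    x i = e ∧ z = (List.range z.length).map (fun t => x (i + 1 + t)) ∧
      x (i + 1 + z.length) = r' := by
  have hlen : (e :: z ++ [r']).length = z.length + 2 := by simp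
  refine ⟨?_, ?_, ?_⟩
  · have := h 0 (by simp)
    simpa using this.symm
  · refine List.ext_getElem (by simp) fun t h1 h2 => ?_
    have ht2 : t + 1 < (e :: z ++ [r']).length := by simp; omega
    have := h (t+1) ht2
    rw [List.getElem_append_left (by simp; omega)] at this
    simp only [List.getElem_cons_succ] at this
    rw [this]
    simp only [List.getElem_map, List.getElem_range]
    congr 1
    omega
  · have ht2 : z.length + 1 < (e :: z ++ [r']).length := by simp
    have := h (z.length + 1) ht2
    rw [List.getElem_append_right (by simp)] at this
    simp only [List.length_cons, Nat.sub_self, List.getElem_singleton] at this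
    rw [this]
    congr 1
    omega

lemma factorN_of_cons {a : A} {s : List A} (h : FactorN x (a :: s)) : FactorN x s := by
  rw [factorN_iff] at h ⊢
  obtain ⟨i, hi⟩ := h
  refine ⟨i + 1, fun t ht => ?_⟩
  have := hi (t+1) (by simpa using Nat.succ_lt_succ ht)
  simp only [List.getElem_cons_succ] at this
  rw [this]
  congr 1
  omega

lemma factorN_snoc {s : List A} (h : FactorN x s) : ∃ g, FactorN x (s ++ [g]) := by
  rw [factorN_iff] at h
  obtain ⟨i, hi⟩ := h
  refine ⟨x (i + s.length), factorN_iff.mpr ⟨i, fun t ht => ?_⟩⟩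
  by_cases h1 : t < s.length
  · rw [List.getElem_append_left h1]
    exact hi t h1
  · have h2 : t = s.length := by simp at ht; omega
    subst h2
    rw [List.getElem_append_right (le_refl _)]
    simp

lemma exists_leftN (hrev : ∀ s : List A, FactorN x s → FactorN x s.reverse)
    {s : List A} (h : FactorN x s) : ∃ g, FactorN x (g :: s) := by
  obtain ⟨g, hg⟩ := factorN_snoc (hrev s h)
  refine ⟨g, ?_⟩
  have := hrev _ hg
  simpa using this

lemma mainN (hrev : ∀ s : List A, FactorN x s → FactorN x s.reverse)
    (hsing : SingularInfN x) {z : List A} {p q r d e : A}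
    (hpq : p < q) (hqr : q < r)
    (h1 : FactorN x (e :: z ++ [p])) (h2 : FactorN x (e :: z ++ [r]))
    (h3 : FactorN x (d :: z ++ [q])) (hde : d ≠ e) : False := by
  set N := z.length with hN
  -- reversed occurrence of d z q : q z̄ d
  have h3' : FactorN x (q :: z.reverse ++ [d]) := by
    have := hrev _ h3
    simpa using this
  obtain ⟨r₀, hr₀⟩ := factorN_iff.mp h3'
  obtain ⟨hq0, hzrev, hd0⟩ := occN_parts hr₀
  rw [List.length_reverse, ← hN] at hzrev hd0
  rcases lt_or_gt_of_ne hde with hlt | hgt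
  · -- d < e : use occurrence of e z r
    obtain ⟨j₀, hj₀⟩ := factorN_iff.mp h2
    obtain ⟨he0, hz, hr1⟩ := occN_parts hj₀
    rw [← hN] at hz hr1
    have key := symN' x hsing (j₀ + 1 + N) (r₀ + 1)
    -- RHS is true
    have hRz : Rn x (r₀ + 1) = listAppendInf z.reverse (Rn x (r₀ + 1 + N)) := by
      conv_lhs => rw [Rn_append x (r₀+1) N]
      congr 1
      rw [hzrev]
    have hLw : Lw x (j₀ + 1 + N) = z.reverse ++ (e :: Lw x j₀) := by
      rw [Lw_add x (j₀+1) N, Lw_succ, he0]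
      congr 2
      exact hz.symm
    have hRHS : InfLtList (Rn x (r₀ + 1)) (Lw x (j₀ + 1 + N)) := by
      rw [hRz, hLw, InfLtList_append_left, Rn_cons, hd0, InfLtList_consInf]
      exact Or.inl hlt
    have hLHS := key.mpr hRHS
    rw [Rn_cons, hr1, Lw_succ, hq0, InfLtList_consInf] at hLHS
    rcases hLHS with h | ⟨h, -⟩
    · exact absurd h (not_lt.mpr hqr.le)
    · exact absurd h (ne_of_gt hqr)
  · -- d > e : use occurrence of e z p
    obtain ⟨i₀, hi₀⟩ := factorN_iff.mp h1
    obtain ⟨he0, hz, hp1⟩ := occN_parts hi₀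
    rw [← hN] at hz hp1
    have key := symN' x hsing (i₀ + 1 + N) (r₀ + 1)
    have hLHS : InfLtList (Rn x (i₀ + 1 + N)) (Lw x (r₀ + 1)) := by
      rw [Rn_cons, hp1, Lw_succ, hq0, InfLtList_consInf]
      exact Or.inl hpq
    have hRHS := key.mp hLHS
    have hRz : Rn x (r₀ + 1) = listAppendInf z.reverse (Rn x (r₀ + 1 + N)) := by
      conv_lhs => rw [Rn_append x (r₀+1) N]
      congr 1
      rw [hzrev]
    have hLw : Lw x (i₀ + 1 + N) = z.reverse ++ (e :: Lw x i₀) := by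
      rw [Lw_add x (i₀+1) N, Lw_succ, he0]
      congr 2
      exact hz.symm
    rw [hRz, hLw, InfLtList_append_left, Rn_cons, hd0, InfLtList_consInf] at hRHS
    rcases hRHS with h | ⟨h, -⟩
    · exact absurd h (not_lt.mpr hgt.le)
    · exact absurd h (ne_of_gt hgt)

lemma DintN (hrev : ∀ s : List A, FactorN x s → FactorN x s.reverse)
    (hrec : ∀ a : A, ∀ N : ℕ, ∃ n ≥ N, x n = a)
    (hsing : SingularInfN x) :
    ∀ z : List A, ∀ p q r : A, p < q → q < r →
      FactorN x (z ++ [p]) → FactorN x (z ++ [r]) → FactorN x (z ++ [q]) := by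
  intro z
  induction z with
  | nil =>
      intro p q r hpq hqr h1 h2
      obtain ⟨n, -, hn⟩ := hrec q 0
      refine factorN_iff.mpr ⟨n, fun t ht => ?_⟩
      simp only [List.nil_append, List.length_singleton] at ht
      interval_cases t
      simpa using hn.symm
  | cons e z' ih =>
      intro p q r hpq hqr h1 h2
      have h1' : FactorN x (z' ++ [p]) := factorN_of_cons h1
      have h2' : FactorN x (z' ++ [r]) := factorN_of_cons h2
      have hq' : FactorN x (z' ++ [q]) := ih p q r hpq hqr h1' h2'
      obtain ⟨d, hd⟩ := exists_leftN hrev hq'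
      by_cases hde : d = e
      · subst hde
        exact hd
      · exact absurd (mainN hrev hsing hpq hqr h1 h2 hd hde) (by simp)

end NatFactors



section Bridge
variable {A : Type*}

lemma flatMap_pure_eq_map {α β : Type*} (g : α → β) (l : List α) :
    (l.flatMap fun a => [g a]) = l.map g := by
  induction l with
  | nil => rfl
  | cons a l ih => simp [List.flatMap_cons, ih]

lemma zlist_bridge (x : ℤ → A) (i : ℤ) (t : ℕ) :
    (List.map (fun j : ℤ => x (i + j)) (do
      let a ← List.range t
      pure ((a : ℤ)))) = (List.range t).map (fun a : ℕ => x (i + (a : ℤ))) := by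
  rw [show (do let a ← List.range t
               pure ((a : ℤ))) = (List.range t).map (fun a : ℕ => (a : ℤ)) from
      flatMap_pure_eq_map _ _]
  rw [List.map_map]
  rfl

lemma factorZ_iff'' [LinearOrder A] {x : ℤ → A} {s : List A} :
    FactorZ x s ↔ ∃ i : ℤ, s = (List.range s.length).map (fun t : ℕ => x (i + (t : ℤ))) := by
  unfold FactorZ
  refine exists_congr fun i => ?_
  rw [zlist_bridge]

end Bridge

section IntSide
variable {A : Type*} [LinearOrder A] (x : ℤ → A)

def Rz (p : ℤ) : ℕ → A := fun n => x (p + n)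
def Lz (p : ℤ) : ℕ → A := fun n => x (p - 1 - n)

lemma Rz_cons (p : ℤ) : Rz x p = consInf (x p) (Rz x (p+1)) := by
  funext n
  cases n with
  | zero => simp [Rz]
  | succ m => simp only [Rz, consInf_succ]; congr 1; push_cast; ring

lemma Lz_cons (p : ℤ) : Lz x (p+1) = consInf (x p) (Lz x p) := by
  funext n
  cases n with
  | zero => simp [Lz]
  | succ m => simp only [Lz, consInf_succ]; congr 1; push_cast; ring

lemma Rz_append (p : ℤ) (t : ℕ) :
    Rz x p = listAppendInf ((List.range t).map (fun i : ℕ => x (p + (i:ℤ)))) (Rz x (p + t)) := by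
  funext n
  by_cases h : n < t
  · rw [listAppendInf]
    rw [dif_pos (by simpa using h)]
    simp [Rz]
  · rw [listAppendInf]
    rw [dif_neg (by simpa using h)]
    simp only [Rz, List.length_map, List.length_range]
    congr 1
    have : ((n - t : ℕ) : ℤ) = (n : ℤ) - t := by omega
    rw [this]; ring

lemma Lz_append (p : ℤ) (t : ℕ) :
    Lz x (p + t) = listAppendInf ((List.range t).map (fun i : ℕ => x (p + (i:ℤ)))).reverse (Lz x p) := by
  funext n
  by_cases h : n < t
  · rw [listAppendInf]
    rw [dif_pos (by simpa using h)]
    rw [List.get_eq_getElem, List.getElem_reverse]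
    simp only [List.getElem_map, List.getElem_range, List.length_map, List.length_range]
    simp only [Lz]
    congr 1
    have : ((t - 1 - n : ℕ) : ℤ) = (t : ℤ) - 1 - n := by omega
    rw [this]; ring
  · rw [listAppendInf]
    rw [dif_neg (by simpa using h)]
    simp only [Lz, List.length_reverse, List.length_map, List.length_range]
    congr 1
    have : ((n - t : ℕ) : ℤ) = (n : ℤ) - t := by omega
    rw [this]; ring

lemma symZ (hsing : SingularInfZ x) (p q : ℤ) (hpq : p ≤ q) (hne : Lz x p ≠ Rz x q) :
    (InfLt (Rz x p) (Lz x q) ↔ InfLt (Rz x q) (Lz x p)) := by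
  obtain ⟨t, rfl⟩ : ∃ t : ℕ, q = p + t := by
    obtain ⟨n, hn⟩ := Int.le.dest hpq
    exact ⟨n, hn.symm⟩
  set v : List A := (List.range t).map (fun i : ℕ => x (p + (i:ℤ))) with hv
  have hvlen : v.length = t := by simp [hv]
  have hR : Rz x p = listAppendInf v (Rz x (p + t)) := Rz_append x p t
  have hL : Lz x (p + t) = listAppendInf v.reverse (Lz x p) := Lz_append x p t
  by_cases hpal : v = v.reverse
  · rw [hR, hL, ← hpal, InfLt_append]
  · have hvne : v ≠ [] := by
      intro h0; apply hpal; rw [h0]; rfl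
    have hform : v = List.map (fun j : ℤ => x (p + j)) (do
        let a ← List.range v.length
        pure ((a : ℤ))) := by
      rw [zlist_bridge, hvlen]
    have hune : (fun n : ℕ => x (p - 1 - n)) ≠ (fun n : ℕ => x (p + v.length + n)) := by
      intro hcontra
      apply hne
      funext n
      have := congrFun hcontra n
      rw [hvlen] at this
      exact this
    have hsg := hsing p v hform hvne hpal hune
    rw [hvlen] at hsg
    have hfun1 : (fun n : ℕ => x (p + t + n)) = Rz x (p + t) := rfl
    have hfun2 : (fun n : ℕ => x (p - 1 - n)) = Lz x p := rfl
    rw [hfun1, hfun2] at hsg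
    rw [hR, hL, InfLt_append_ne v v.reverse (by simp) hpal]
    exact hsg

lemma symZ' (hsing : SingularInfZ x) (p q : ℤ)
    (hne1 : Lz x p ≠ Rz x q) (hne2 : Lz x q ≠ Rz x p) :
    (InfLt (Rz x p) (Lz x q) ↔ InfLt (Rz x q) (Lz x p)) := by
  rcases le_total p q with h | h
  · exact symZ x hsing p q h hne1
  · exact (symZ x hsing q p h hne2).symm

end IntSide

section IntFactors
variable {A : Type*} [LinearOrder A] {x : ℤ → A}

lemma factorZ_iff {s : List A} :
    FactorZ x s ↔ ∃ i : ℤ, ∀ t (h : t < s.length), s[t] = x (i + t) := by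
  rw [factorZ_iff'']
  constructor
  · rintro ⟨i, hi⟩
    refine ⟨i, fun t h => ?_⟩
    rw [List.getElem_of_eq hi h]
    simp
  · rintro ⟨i, hi⟩
    refine ⟨i, List.ext_getElem (by simp) fun t h1 h2 => ?_⟩
    simp [hi t h1]

lemma occZ_parts {e r' : A} {z : List A} {i : ℤ}
    (h : ∀ t (ht : t < (e :: z ++ [r']).length), (e :: z ++ [r'])[t] = x (i + t)) :
    x i = e ∧ z = (List.range z.length).map (fun t : ℕ => x (i + 1 + (t:ℤ))) ∧
      x (i + 1 + z.length) = r' := by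
  refine ⟨?_, ?_, ?_⟩
  · have := h 0 (by simp)
    simpa using this.symm
  · refine List.ext_getElem (by simp) fun t h1 h2 => ?_
    have ht2 : t + 1 < (e :: z ++ [r']).length := by simp; omega
    have := h (t+1) ht2
    rw [List.getElem_append_left (by simp; omega)] at this
    simp only [List.getElem_cons_succ] at this
    rw [this]
    simp only [List.getElem_map, List.getElem_range]
    congr 1
    push_cast
    ring
  · have ht2 : z.length + 1 < (e :: z ++ [r']).length := by simp
    have := h (z.length + 1) ht2
    rw [List.getElem_append_right (by simp)] at this
    simp only [List.length_cons, Nat.sub_self, List.getElem_singleton] at this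
    rw [this]
    congr 1
    push_cast
    ring

lemma factorZ_of_cons {a : A} {s : List A} (h : FactorZ x (a :: s)) : FactorZ x s := by
  rw [factorZ_iff] at h ⊢
  obtain ⟨i, hi⟩ := h
  refine ⟨i + 1, fun t ht => ?_⟩
  have := hi (t+1) (by simpa using Nat.succ_lt_succ ht)
  simp only [List.getElem_cons_succ] at this
  rw [this]
  congr 1
  push_cast
  ring

lemma exists_leftZ {s : List A} (h : FactorZ x s) : ∃ g, FactorZ x (g :: s) := by
  rw [factorZ_iff] at h
  obtain ⟨i, hi⟩ := h
  refine ⟨x (i - 1), factorZ_iff.mpr ⟨i - 1, fun t ht => ?_⟩⟩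
  cases t with
  | zero => simp
  | succ m =>
      simp only [List.getElem_cons_succ]
      rw [hi m (by simpa using ht)]
      congr 1
      push_cast
      ring

lemma mainZ (hrev : ∀ s : List A, FactorZ x s → FactorZ x s.reverse)
    (hsing : SingularInfZ x) {z : List A} {p q r d e : A}
    (hpq : p < q) (hqr : q < r)
    (h1 : FactorZ x (e :: z ++ [p])) (h2 : FactorZ x (e :: z ++ [r]))
    (h3 : FactorZ x (d :: z ++ [q])) (hde : d ≠ e) : False := by
  set N := z.length with hN
  have h3' : FactorZ x (q :: z.reverse ++ [d]) := by
    have := hrev _ h3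
    simpa using this
  obtain ⟨r₀, hr₀⟩ := factorZ_iff.mp h3'
  obtain ⟨hq0, hzrev, hd0⟩ := occZ_parts hr₀
  rw [List.length_reverse, ← hN] at hzrev hd0
  rcases lt_or_gt_of_ne hde with hlt | hgt
  · -- d < e : use occurrence of e z r
    obtain ⟨j₀, hj₀⟩ := factorZ_iff.mp h2
    obtain ⟨he0, hz, hr1⟩ := occZ_parts hj₀
    rw [← hN] at hz hr1
    -- nondegeneracy facts
    have hfact1 : Lz x (j₀ + 1 + N) (N : ℕ) = e := by
      simp only [Lz]
      rw [show j₀ + 1 + (N : ℤ) - 1 - (N : ℕ) = j₀ by push_cast; ring]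
      exact he0
    have hfact2 : Rz x (r₀ + 1) (N : ℕ) = d := by
      simp only [Rz]; exact hd0
    have hfact3 : Lz x (r₀ + 1) 0 = q := by
      simp only [Lz]
      rw [show r₀ + 1 - 1 - ((0:ℕ) : ℤ) = r₀ by push_cast; ring]
      exact hq0
    have hfact4 : Rz x (j₀ + 1 + N) 0 = r := by
      simp only [Rz]
      rw [show j₀ + 1 + (N : ℤ) + ((0:ℕ) : ℤ) = j₀ + 1 + N by push_cast; ring]
      exact hr1
    have key : InfLt (Rz x (j₀ + 1 + N)) (Lz x (r₀ + 1)) ↔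
        InfLt (Rz x (r₀ + 1)) (Lz x (j₀ + 1 + N)) := by
      apply symZ' x hsing
      · intro hcontra
        apply hde
        have := congrFun hcontra (N : ℕ)
        rw [hfact1, hfact2] at this
        exact this.symm
      · intro hcontra
        apply ne_of_lt hqr
        have := congrFun hcontra 0
        rw [hfact3, hfact4] at this
        exact this
    have hRz2 : Rz x (r₀ + 1) = listAppendInf z.reverse (Rz x (r₀ + 1 + N)) := by
      conv_lhs => rw [Rz_append x (r₀+1) N]
      congr 1
      rw [hzrev]
    have hLz2 : Lz x (j₀ + 1 + N) = listAppendInf z.reverse (consInf e (Lz x j₀)) := by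
      have h0 : Lz x (j₀ + 1 + N) = listAppendInf ((List.range N).map (fun i : ℕ => x (j₀ + 1 + (i:ℤ)))).reverse (Lz x (j₀ + 1)) := Lz_append x (j₀+1) N
      rw [h0, ← hz, Lz_cons, he0]
    have hRHS : InfLt (Rz x (r₀ + 1)) (Lz x (j₀ + 1 + N)) := by
      rw [hRz2, hLz2, InfLt_append, Rz_cons, hd0, InfLt_consInf]
      exact Or.inl hlt
    have hLHS := key.mpr hRHS
    rw [Rz_cons, show x (j₀ + 1 + (N:ℤ)) = r from hr1] at hLHS
    have hLzc : Lz x (r₀ + 1) = consInf q (Lz x r₀) := by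
      rw [Lz_cons, hq0]
    rw [hLzc, InfLt_consInf] at hLHS
    rcases hLHS with h | ⟨h, -⟩
    · exact absurd h (not_lt.mpr hqr.le)
    · exact absurd h (ne_of_gt hqr)
  · -- d > e : use occurrence of e z p
    obtain ⟨i₀, hi₀⟩ := factorZ_iff.mp h1
    obtain ⟨he0, hz, hp1⟩ := occZ_parts hi₀
    rw [← hN] at hz hp1
    have hfact1 : Lz x (i₀ + 1 + N) (N : ℕ) = e := by
      simp only [Lz]
      rw [show i₀ + 1 + (N : ℤ) - 1 - (N : ℕ) = i₀ by push_cast; ring]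
      exact he0
    have hfact2 : Rz x (r₀ + 1) (N : ℕ) = d := by
      simp only [Rz]; exact hd0
    have hfact3 : Lz x (r₀ + 1) 0 = q := by
      simp only [Lz]
      rw [show r₀ + 1 - 1 - ((0:ℕ) : ℤ) = r₀ by push_cast; ring]
      exact hq0
    have hfact4 : Rz x (i₀ + 1 + N) 0 = p := by
      simp only [Rz]
      rw [show i₀ + 1 + (N : ℤ) + ((0:ℕ) : ℤ) = i₀ + 1 + N by push_cast; ring]
      exact hp1
    have key : InfLt (Rz x (i₀ + 1 + N)) (Lz x (r₀ + 1)) ↔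
        InfLt (Rz x (r₀ + 1)) (Lz x (i₀ + 1 + N)) := by
      apply symZ' x hsing
      · intro hcontra
        apply hde
        have := congrFun hcontra (N : ℕ)
        rw [hfact1, hfact2] at this
        exact this.symm
      · intro hcontra
        apply ne_of_lt hpq
        have := congrFun hcontra 0
        rw [hfact3, hfact4] at this
        exact this.symm
    have hLHS : InfLt (Rz x (i₀ + 1 + N)) (Lz x (r₀ + 1)) := by
      rw [Rz_cons, show x (i₀ + 1 + (N:ℤ)) = p from hp1]
      rw [show Lz x (r₀ + 1) = consInf q (Lz x r₀) by rw [Lz_cons, hq0]]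
      rw [InfLt_consInf]
      exact Or.inl hpq
    have hRHS := key.mp hLHS
    have hRz2 : Rz x (r₀ + 1) = listAppendInf z.reverse (Rz x (r₀ + 1 + N)) := by
      conv_lhs => rw [Rz_append x (r₀+1) N]
      congr 1
      rw [hzrev]
    have hLz2 : Lz x (i₀ + 1 + N) = listAppendInf z.reverse (consInf e (Lz x i₀)) := by
      have h0 : Lz x (i₀ + 1 + N) = listAppendInf ((List.range N).map (fun i : ℕ => x (i₀ + 1 + (i:ℤ)))).reverse (Lz x (i₀ + 1)) := Lz_append x (i₀+1) N
      rw [h0, ← hz, Lz_cons, he0]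
    rw [hRz2, hLz2, InfLt_append, Rz_cons, hd0, InfLt_consInf] at hRHS
    rcases hRHS with h | ⟨h, -⟩
    · exact absurd h (not_lt.mpr hgt.le)
    · exact absurd h (ne_of_gt hgt)

lemma DintZ (hrev : ∀ s : List A, FactorZ x s → FactorZ x s.reverse)
    (hrec : ∀ a : A, ∀ N : ℤ, ∃ n ≥ N, x n = a)
    (hsing : SingularInfZ x) :
    ∀ z : List A, ∀ p q r : A, p < q → q < r →
      FactorZ x (z ++ [p]) → FactorZ x (z ++ [r]) → FactorZ x (z ++ [q]) := by
  intro z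
  induction z with
  | nil =>
      intro p q r hpq hqr h1 h2
      obtain ⟨n, -, hn⟩ := hrec q 0
      refine factorZ_iff.mpr ⟨n, fun t ht => ?_⟩
      simp only [List.nil_append, List.length_singleton] at ht
      interval_cases t
      simpa using hn.symm
  | cons e z' ih =>
      intro p q r hpq hqr h1 h2
      have h1' : FactorZ x (z' ++ [p]) := factorZ_of_cons h1
      have h2' : FactorZ x (z' ++ [r]) := factorZ_of_cons h2
      have hq' : FactorZ x (z' ++ [q]) := ih p q r hpq hqr h1' h2'
      obtain ⟨d, hd⟩ := exists_leftZ hq'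
      by_cases hde : d = e
      · subst hde
        exact hd
      · exact absurd (mainZ hrev hsing hpq hqr h1 h2 hd hde) (by simp)

end IntFactors

theorem singular_arrival_departure_intervals (k : ℕ) :
    (∀ x : ℕ → Fin k,
      (∀ s : List (Fin k), FactorN x s → FactorN x s.reverse) →
      (∀ a : Fin k, ∀ N : ℕ, ∃ n ≥ N, x n = a) →
      SingularInfN x →
      ∀ s : List (Fin k), FactorN x s →
        IsIntervalSet {e | FactorN x (s ++ [e])} ∧
        IsIntervalSet {e | FactorN x (e :: s)}) ∧
    (∀ x : ℤ → Fin k,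
      (∀ s : List (Fin k), FactorZ x s → FactorZ x s.reverse) →
      (∀ a : Fin k, ∀ N : ℤ, ∃ n ≥ N, x n = a) →
      SingularInfZ x →
      ∀ s : List (Fin k), FactorZ x s →
        IsIntervalSet {e | FactorZ x (s ++ [e])} ∧
        IsIntervalSet {e | FactorZ x (e :: s)}) := by
  constructor
  · intro x hrev hrec hsing s _
    constructor
    · intro p q r hpq hqr hp hr
      rcases eq_or_lt_of_le hpq with rfl | hpq'
      · exact hp
      rcases eq_or_lt_of_le hqr with rfl | hqr'
      · exact hr
      exact DintN hrev hrec hsing s p q r hpq' hqr' hp hr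
    · intro p q r hpq hqr hp hr
      rcases eq_or_lt_of_le hpq with rfl | hpq'
      · exact hp
      rcases eq_or_lt_of_le hqr with rfl | hqr'
      · exact hr
      have hp' : FactorN x (s.reverse ++ [p]) := by simpa using hrev _ hp
      have hr' : FactorN x (s.reverse ++ [r]) := by simpa using hrev _ hr
      have hq' := DintN hrev hrec hsing s.reverse p q r hpq' hqr' hp' hr'
      have := hrev _ hq'
      simpa using this
  · intro x hrev hrec hsing s _
    constructor
    · intro p q r hpq hqr hp hr
      rcases eq_or_lt_of_le hpq with rfl | hpq'
      · exact hp
      rcases eq_or_lt_of_le hqr with rfl | hqr'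
      · exact hr
      exact DintZ hrev hrec hsing s p q r hpq' hqr' hp hr
    · intro p q r hpq hqr hp hr
      rcases eq_or_lt_of_le hpq with rfl | hpq'
      · exact hp
      rcases eq_or_lt_of_le hqr with rfl | hqr'
      · exact hr
      have hp' : FactorZ x (s.reverse ++ [p]) := by simpa using hrev _ hp
      have hr' : FactorZ x (s.reverse ++ [r]) := by simpa using hrev _ hr
      have hq' := DintZ hrev hrec hsing s.reverse p q r hpq' hqr' hp' hr'
      have := hrev _ hq'
      simpa using this
end
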